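/- arXiv:2406.13955 — 11 statements merged into one kernel-verified Lean document; each statement's English description precedes it below -/
import Mathlib

section
/- Let n ≥ 5 be odd. Define r(v_i) = (-1)^{i-1}·i for i ∈ {1,...,n-1} and r(v_n) = n - 1/2, and set thresholds θ_1 = -1.1, θ_2 = 1.1, θ_3 = n + 0.4, θ_4 = n + 0.6. Then for any two distinct vertices u, v of C_n, uv is an edge of C_n if and only if the number of indices i ∈ {1,2,3,4} with θ_i ≤ r(u) + r(v) is odd. Hence C_n is a 4-threshold graph. -/
/-!
Doubling the ranks makes them integers: `2 r(vᵢ) = 2 (-1)^(i-1) i` for `i < n` and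
`2 r(vₙ) = 2n - 1`. A doubled rank sum `t` has an odd number of thresholds below `t / 2`
exactly when `|t| ≤ 2` or `t = 2n + 1`. Two of the alternating values `±2i`, `±2j` sum to
something of absolute value at most `2` iff they have opposite signs and `|i - j| = 1`, and
their sum is even, so never `2n + 1`. Adding `2n - 1` to `+2i` (odd `i`) gives `2n + 1` only
for `i = 1`, and adding it to `-2i` (even `i`) lands in `[-2, 2]` only for `i = n - 1`, which
is even because `n` is odd.
-/

open Finset

theorem odd_card_filter_le_iff {α : Type*} [LinearOrder α] {θ : Fin 4 → α}
    (hθ : StrictMono θ) (s : α) :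
    Odd #{i | θ i ≤ s} ↔ s ∈ Set.Ico (θ 0) (θ 1) ∪ Set.Ico (θ 2) (θ 3) := by
  have h01 : θ 0 < θ 1 := hθ (by decide)
  have h12 : θ 1 < θ 2 := hθ (by decide)
  have h23 : θ 2 < θ 3 := hθ (by decide)
  rw [card_filter, Fin.sum_univ_four]
  simp only [Set.mem_union, Set.mem_Ico]
  split_ifs <;> norm_num [Nat.odd_iff] <;> first
    | (refine ⟨fun _ => ?_, fun _ => ?_⟩ <;> order)
    | (left; constructor <;> order)
    | (right; constructor <;> order)

theorem SimpleGraph.cycleGraph_adj_iff_val {n : ℕ} {u v : Fin n} (huv : u ≠ v) :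
    (cycleGraph n).Adj u v ↔
      u.val + 1 = v ∨ v.val + 1 = u ∨ (u.val + 1 = n ∧ v.val = 0) ∨
        (v.val + 1 = n ∧ u.val = 0) := by
  obtain ⟨m, rfl⟩ : ∃ m, n = m + 2 := ⟨n - 2, by have := u.2; have := v.2; omega⟩
  rw [cycleGraph_adj, sub_eq_iff_eq_add, sub_eq_iff_eq_add, add_comm 1 v, add_comm 1 u,
    Fin.ext_iff, Fin.ext_iff, Fin.val_add_one, Fin.val_add_one]
  simp only [Fin.ext_iff, Fin.val_last]
  have := u.2; have := v.2
  split_ifs <;> omega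

theorem strictMono_thresholds {n : ℕ} (hn : 1 ≤ n) :
    StrictMono ![(-1.1 : ℝ), 1.1, n + 0.4, n + 0.6] := by
  have : (1 : ℝ) ≤ n := by exact_mod_cast hn
  refine Fin.strictMono_iff_lt_succ.2 fun i => ?_
  fin_cases i
  · show (-1.1 : ℝ) < 1.1; norm_num
  · show (1.1 : ℝ) < n + 0.4; linarith
  · show (n : ℝ) + 0.4 < n + 0.6; linarith

theorem intCast_div_two_mem_windows_iff (n : ℕ) (t : ℤ) :
    (t / 2 : ℝ) ∈ Set.Ico (-1.1) 1.1 ∪ Set.Ico ((n : ℝ) + 0.4) (n + 0.6) ↔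
      |t| ≤ 2 ∨ t = 2 * n + 1 := by
  have mem_Ico (a b : ℝ) : (t / 2 : ℝ) ∈ Set.Ico a b ↔ t ∈ Set.Ico ⌈2 * a⌉ ⌈2 * b⌉ := by
    rw [← Int.preimage_Ico, Set.mem_preimage, Set.mem_Ico, Set.mem_Ico, le_div_iff₀ two_pos,
      div_lt_iff₀ two_pos, mul_comm a, mul_comm b]
  have ceil_add (c : ℝ) : ⌈2 * ((n : ℝ) + c)⌉ = 2 * n + ⌈2 * c⌉ := by
    rw [show 2 * ((n : ℝ) + c) = ((2 * n : ℤ) : ℝ) + 2 * c by push_cast; ring,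
      Int.ceil_intCast_add]
  rw [Set.mem_union, mem_Ico, mem_Ico, ceil_add, ceil_add, Set.mem_Ico, Set.mem_Ico, abs_le]
  norm_num
  omega

theorem abs_two_mul_neg_one_pow_add_le_two_iff {i j : ℕ} (hij : i ≠ j) :
    |2 * (-1 : ℤ) ^ i * (i + 1) + 2 * (-1) ^ j * (j + 1)| ≤ 2 ↔ i + 1 = j ∨ j + 1 = i := by
  rw [abs_le]
  rcases Nat.even_or_odd i with hi | hi <;> rcases Nat.even_or_odd j with hj | hj <;>
    simp only [hi.neg_one_pow, hj.neg_one_pow] <;>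
    obtain ⟨k, rfl⟩ := hi <;> obtain ⟨l, rfl⟩ := hj <;> omega

def doubledCycleRank (n i : ℕ) : ℤ :=
  if i = n - 1 then 2 * n - 1 else 2 * (-1) ^ i * (i + 1)

theorem cast_doubledCycleRank_div_two (n i : ℕ) :
    (doubledCycleRank n i / 2 : ℝ) =
      if i = n - 1 then (n : ℝ) - 1 / 2 else (-1 : ℝ) ^ i * (i + 1) := by
  unfold doubledCycleRank
  split_ifs <;> push_cast <;> ring

section doubledCycleRank

variable {n i j : ℕ}

theorem doubledCycleRank_add_iff_of_ne_last (hi : i + 1 < n) (hj : j + 1 < n) (hij : i ≠ j) :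
    |doubledCycleRank n i + doubledCycleRank n j| ≤ 2 ∨
        doubledCycleRank n i + doubledCycleRank n j = 2 * n + 1 ↔
      i + 1 = j ∨ j + 1 = i := by
  unfold doubledCycleRank
  rw [if_neg (by omega), if_neg (by omega), ← abs_two_mul_neg_one_pow_add_le_two_iff hij]
  refine or_iff_left fun h => ?_
  obtain ⟨k, hk⟩ : Even (2 * n + 1 : ℤ) :=
    h ▸ ⟨(-1) ^ i * (i + 1) + (-1) ^ j * (j + 1), by ring⟩
  omega

theorem doubledCycleRank_last_add_iff (hodd : Odd n) (hj : j + 1 < n) :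
    |doubledCycleRank n (n - 1) + doubledCycleRank n j| ≤ 2 ∨
        doubledCycleRank n (n - 1) + doubledCycleRank n j = 2 * n + 1 ↔
      j = 0 ∨ j + 2 = n := by
  unfold doubledCycleRank
  rw [if_pos rfl, if_neg (by omega), abs_le]
  obtain ⟨m, rfl⟩ := hodd
  rcases Nat.even_or_odd j with hj' | hj' <;> rw [hj'.neg_one_pow] <;>
    obtain ⟨l, rfl⟩ := hj' <;> omega

theorem doubledCycleRank_add_iff (hodd : Odd n) (hi : i < n) (hj : j < n) (hij : i ≠ j) :
    |doubledCycleRank n i + doubledCycleRank n j| ≤ 2 ∨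
        doubledCycleRank n i + doubledCycleRank n j = 2 * n + 1 ↔
      i + 1 = j ∨ j + 1 = i ∨ (i + 1 = n ∧ j = 0) ∨ (j + 1 = n ∧ i = 0) := by
  rcases eq_or_ne i (n - 1) with rfl | hi' <;> rcases eq_or_ne j (n - 1) with rfl | hj'
  · exact absurd rfl hij
  · rw [doubledCycleRank_last_add_iff hodd (by omega)]
    omega
  · rw [add_comm, doubledCycleRank_last_add_iff hodd (by omega)]
    omega
  · rw [doubledCycleRank_add_iff_of_ne_last (by omega) (by omega) hij]
    omega

end doubledCycleRank

open Classical in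
/-- Vertex vᵢ corresponds to index i-1 in Fin n. -/
theorem cn_odd_four_threshold_explicit_general (n : ℕ) (hodd : Odd n) :
    let r : Fin n → ℝ := fun i =>
      if (i : ℕ) = n - 1 then (n : ℝ) - 1/2 else (-1 : ℝ) ^ (i : ℕ) * ((i : ℕ) + 1)
    let θ : Fin 4 → ℝ := ![-1.1, 1.1, (n : ℝ) + 0.4, (n : ℝ) + 0.6]
    ∀ u v : Fin n, u ≠ v →
      ((SimpleGraph.cycleGraph n).Adj u v ↔
        Odd (Finset.univ.filter (fun i => θ i ≤ r u + r v)).card) := by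
  intro r θ u v huv
  have hr (w : Fin n) : r w = doubledCycleRank n w / 2 :=
    (cast_doubledCycleRank_div_two n w).symm
  rw [SimpleGraph.cycleGraph_adj_iff_val huv,
    odd_card_filter_le_iff (strictMono_thresholds hodd.pos), hr, hr, ← add_div, ← Int.cast_add]
  exact ((intCast_div_two_mem_windows_iff n _).trans
    (doubledCycleRank_add_iff hodd u.2 v.2 (Fin.val_ne_of_ne huv))).symm

open Classical in
/-- For odd n ≥ 5, the explicit ranks r(vᵢ) = (-1)^(i-1)·i (for i ∈ [n-1]),
r(vₙ) = n - 1/2, with thresholds -1.1, 1.1, n + 0.4, n + 0.6, give a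
4-threshold representation of Cₙ.  (Vertex vᵢ corresponds to index i-1 in Fin n.) -/
theorem cn_odd_four_threshold_explicit (n : ℕ) (hn : 5 ≤ n) (hodd : Odd n) :
    let r : Fin n → ℝ := fun i =>
      if (i : ℕ) = n - 1 then (n : ℝ) - 1/2 else (-1 : ℝ) ^ (i : ℕ) * ((i : ℕ) + 1)
    let θ : Fin 4 → ℝ := ![-1.1, 1.1, (n : ℝ) + 0.4, (n : ℝ) + 0.6]
    ∀ u v : Fin n, u ≠ v →
      ((SimpleGraph.cycleGraph n).Adj u v ↔
        Odd (Finset.univ.filter (fun i => θ i ≤ r u + r v)).card) :=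
  cn_odd_four_threshold_explicit_general n hodd
end

section
/- Let n ≥ 6 be even. Define r(v_i) = (-1)^{i-1}·i for i ∈ {1,...,n-1} and r(v_n) = -n + 1/2, with thresholds θ_1 = -n + 1.4, θ_2 = -n + 1.6, θ_3 = -1.1, θ_4 = 1.1. Then for any two distinct vertices u, v of C_n, uv is an edge of C_n if and only if the number of indices i ∈ {1,2,3,4} with θ_i ≤ r(u) + r(v) is odd. Hence C_n is a 4-threshold graph. -/
open Classical in
lemma odd_count_iff (t0 t1 t2 t3 s : ℝ) (h01 : t0 ≤ t1) (h12 : t1 ≤ t2) (h23 : t2 ≤ t3) :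
    Odd ((Finset.univ.filter fun i => (![t0,t1,t2,t3]) i ≤ s).card) ↔
      ((t0 ≤ s ∧ ¬ t1 ≤ s) ∨ (t2 ≤ s ∧ ¬ t3 ≤ s)) := by
  rw [Finset.card_filter, Fin.sum_univ_four]
  simp only [Matrix.cons_val_zero, Matrix.cons_val_one, Matrix.head_cons,
    Matrix.cons_val_two, Matrix.tail_cons, Matrix.cons_val_three]
  by_cases h0 : t0 ≤ s <;> by_cases h1 : t1 ≤ s <;> by_cases h2 : t2 ≤ s <;>
    by_cases h3 : t3 ≤ s <;> simp [h0, h1, h2, h3] <;> first | linarith | decide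

lemma fin_sub_val {n : ℕ} (u v : Fin n) :
    ((u - v) : Fin n).val = if v.val ≤ u.val then u.val - v.val else u.val + n - v.val := by
  have hu := u.isLt; have hv := v.isLt
  rw [Fin.sub_def]
  split
  · next h =>
    have e : n - v.val + u.val = (u.val - v.val) + n := by omega
    simp only [e, Nat.add_mod_right]
    exact Nat.mod_eq_of_lt (by omega)
  · next h =>
    have e : n - v.val + u.val = u.val + n - v.val := by omega
    rw [e]
    exact Nat.mod_eq_of_lt (by omega)

lemma cycle_adj_nat {n : ℕ} (hn : 6 ≤ n) (u v : Fin n) :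
    (SimpleGraph.cycleGraph n).Adj u v ↔
      ((u:ℕ) + 1 = v ∨ (v:ℕ) + 1 = u ∨ ((u:ℕ) = 0 ∧ (v:ℕ) = n - 1) ∨
        ((v:ℕ) = 0 ∧ (u:ℕ) = n - 1)) := by
  have hu := u.isLt; have hv := v.isLt
  rw [SimpleGraph.cycleGraph_adj', fin_sub_val, fin_sub_val]
  split <;> split <;> omega

open Classical in
lemma cn_aux (n : ℕ) (hn : 6 ≤ n) (heven : Even n) (u v : Fin n) (hlt : (u:ℕ) < (v:ℕ)) :
    ((SimpleGraph.cycleGraph n).Adj u v ↔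
      Odd ((Finset.univ.filter (fun i =>
        (![-(n : ℝ) + 1.4, -(n : ℝ) + 1.6, -1.1, 1.1]) i ≤
          (if (u : ℕ) = n - 1 then -(n : ℝ) + 1/2 else (-1:ℝ)^(u:ℕ) * ((u:ℕ)+1)) +
          (if (v : ℕ) = n - 1 then -(n : ℝ) + 1/2 else (-1:ℝ)^(v:ℕ) * ((v:ℕ)+1)))).card)) := by
  have hu := u.isLt; have hv := v.isLt
  have hn6 : (6:ℝ) ≤ (n:ℝ) := by exact_mod_cast hn
  have hu0 : (0:ℝ) ≤ ((u:ℕ):ℝ) := Nat.cast_nonneg _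
  have hv0 : (0:ℝ) ≤ ((v:ℕ):ℝ) := Nat.cast_nonneg _
  rw [odd_count_iff _ _ _ _ _ (by norm_num) (by linarith) (by norm_num)]
  rw [cycle_adj_nat hn]
  by_cases hb : (v:ℕ) = n - 1
  · have ha : ¬ (u:ℕ) = n - 1 := by omega
    rw [if_pos hb, if_neg ha]
    rcases Nat.even_or_odd (u:ℕ) with he | ho
    · rw [he.neg_one_pow, one_mul]
      have hB : (-(n:ℝ) + 1.6 ≤ (((u:ℕ):ℝ) + 1) + (-(n:ℝ) + 1/2)) ↔ 1 ≤ (u:ℕ) := by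
        constructor
        · intro h
          have h2 : (0:ℝ) < ((u:ℕ):ℝ) := by linarith
          exact Nat.cast_pos.mp h2
        · intro h
          have h2 : (1:ℝ) ≤ ((u:ℕ):ℝ) := by exact_mod_cast h
          linarith
      have hC : (-1.1 ≤ (((u:ℕ):ℝ) + 1) + (-(n:ℝ) + 1/2)) ↔ (u:ℕ) = n - 2 := by
        constructor
        · intro h
          have h2 : (n:ℝ) < ((u:ℕ):ℝ) + 3 := by linarith
          have h3 : n < (u:ℕ) + 3 := by exact_mod_cast h2
          omega
        · intro h
          have h2 : ((u:ℕ):ℝ) = ((n - 2 : ℕ) : ℝ) := by rw [h]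
          rw [Nat.cast_sub (by omega)] at h2
          push_cast at h2
          linarith
      have hD : ¬ (1.1 ≤ (((u:ℕ):ℝ) + 1) + (-(n:ℝ) + 1/2)) := by
        have h1 : (u:ℕ) ≤ n - 2 := by omega
        have h2 : ((u:ℕ):ℝ) ≤ ((n - 2 : ℕ):ℝ) := by exact_mod_cast h1
        rw [Nat.cast_sub (by omega)] at h2
        push_cast at h2
        linarith
      constructor
      · rintro (h | h | ⟨h1, h2⟩ | ⟨h1, h2⟩)
        · right; exact ⟨hC.mpr (by omega), hD⟩
        · exfalso; omega
        · left
          refine ⟨by linarith, fun hc => ?_⟩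
          have := hB.mp hc; omega
        · exfalso; omega
      · rintro (⟨h1, h2⟩ | ⟨h1, h2⟩)
        · have h3 : ¬ 1 ≤ (u:ℕ) := fun h => h2 (hB.mpr h)
          right; right; left; exact ⟨by omega, hb⟩
        · have := hC.mp h1
          left; omega
    · rw [ho.neg_one_pow, neg_one_mul]
      apply iff_of_false
      · obtain ⟨k, hk⟩ := ho; obtain ⟨m, hm⟩ := heven
        rintro (h | h | ⟨h1, h2⟩ | ⟨h1, h2⟩) <;> omega
      · rintro (⟨h1, h2⟩ | ⟨h1, h2⟩) <;> linarith
  · have ha : ¬ (u:ℕ) = n - 1 := by omega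
    rw [if_neg ha, if_neg hb]
    rcases Nat.even_or_odd (u:ℕ) with heu | hou <;> rcases Nat.even_or_odd (v:ℕ) with hev | hov
    · -- both even
      rw [heu.neg_one_pow, hev.neg_one_pow, one_mul, one_mul]
      apply iff_of_false
      · obtain ⟨k, hk⟩ := heu; obtain ⟨l, hl⟩ := hev; obtain ⟨m, hm⟩ := heven
        rintro (h | h | ⟨h1, h2⟩ | ⟨h1, h2⟩) <;> omega
      · rintro (⟨h1, h2⟩ | ⟨h1, h2⟩)
        · exact h2 (by linarith)
        · exact h2 (by linarith)
    · -- u even, v odd : s = u - v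
      rw [heu.neg_one_pow, hov.neg_one_pow, one_mul, neg_one_mul]
      have hvr : ((v:ℕ):ℝ) ≤ (n:ℝ) - 2 := by
        have h1 : (v:ℕ) ≤ n - 2 := by omega
        have h2 : ((v:ℕ):ℝ) ≤ ((n - 2 : ℕ):ℝ) := by exact_mod_cast h1
        rw [Nat.cast_sub (by omega)] at h2
        push_cast at h2
        linarith
      constructor
      · rintro (h | h | ⟨h1, h2⟩ | ⟨h1, h2⟩)
        · right
          have hc : ((u:ℕ):ℝ) + 1 = ((v:ℕ):ℝ) := by exact_mod_cast h
          constructor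
          · linarith
          · intro hcontra; linarith
        · exfalso; omega
        · exfalso; omega
        · exfalso; omega
      · rintro (⟨h1, h2⟩ | ⟨h1, h2⟩)
        · exact absurd (by linarith) h2
        · left
          have hc : ((v:ℕ):ℝ) < ((u:ℕ):ℝ) + 2 := by linarith
          have hc2 : (v:ℕ) < (u:ℕ) + 2 := by exact_mod_cast hc
          omega
    · -- u odd, v even : s = v - u
      rw [hou.neg_one_pow, hev.neg_one_pow, neg_one_mul, one_mul]
      have hcast : ((u:ℕ):ℝ) + 1 ≤ ((v:ℕ):ℝ) := by exact_mod_cast hlt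
      constructor
      · rintro (h | h | ⟨h1, h2⟩ | ⟨h1, h2⟩)
        · right
          have hc : ((u:ℕ):ℝ) + 1 = ((v:ℕ):ℝ) := by exact_mod_cast h
          constructor
          · linarith
          · intro hcontra; linarith
        · exfalso; omega
        · exfalso; omega
        · exfalso; omega
      · rintro (⟨h1, h2⟩ | ⟨h1, h2⟩)
        · exact absurd (by linarith) h2
        · left
          have hc : ((v:ℕ):ℝ) < ((u:ℕ):ℝ) + 2 := by
            have := not_le.mp h2
            linarith
          have hc2 : (v:ℕ) < (u:ℕ) + 2 := by exact_mod_cast hc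
          omega
    · -- both odd
      rw [hou.neg_one_pow, hov.neg_one_pow, neg_one_mul, neg_one_mul]
      apply iff_of_false
      · obtain ⟨k, hk⟩ := hou; obtain ⟨l, hl⟩ := hov; obtain ⟨m, hm⟩ := heven
        rintro (h | h | ⟨h1, h2⟩ | ⟨h1, h2⟩) <;> omega
      · rintro (⟨h1, h2⟩ | ⟨h1, h2⟩)
        · have h3 : ((u:ℕ):ℝ) + ((v:ℕ):ℝ) + 3 < (n:ℝ) := by linarith
          have h4 : (u:ℕ) + (v:ℕ) + 3 < n := by exact_mod_cast h3
          have h5 := not_le.mp h2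
          have h6 : (n:ℝ) < ((u:ℕ):ℝ) + ((v:ℕ):ℝ) + 4 := by linarith
          have h7 : n < (u:ℕ) + (v:ℕ) + 4 := by exact_mod_cast h6
          omega
        · linarith

open Classical in
/-- For even n ≥ 6, the explicit ranks r(vᵢ) = (-1)^(i-1)·i (for i ∈ [n-1]),
r(vₙ) = -n + 1/2, with thresholds -n + 1.4, -n + 1.6, -1.1, 1.1, give a
4-threshold representation of Cₙ.  (Vertex vᵢ corresponds to index i-1 in Fin n.) -/
theorem cn_even_four_threshold_explicit (n : ℕ) (hn : 6 ≤ n) (heven : Even n) :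
    let r : Fin n → ℝ := fun i =>
      if (i : ℕ) = n - 1 then -(n : ℝ) + 1/2 else (-1 : ℝ) ^ (i : ℕ) * ((i : ℕ) + 1)
    let θ : Fin 4 → ℝ := ![-(n : ℝ) + 1.4, -(n : ℝ) + 1.6, -1.1, 1.1]
    ∀ u v : Fin n, u ≠ v →
      ((SimpleGraph.cycleGraph n).Adj u v ↔
        Odd (Finset.univ.filter (fun i => θ i ≤ r u + r v)).card) := by
  intro r θ u v huv
  have hne : (u:ℕ) ≠ (v:ℕ) := fun h => huv (Fin.ext h)
  rcases lt_or_gt_of_ne hne with h | h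
  · exact cn_aux n hn heven u v h
  · have key := cn_aux n hn heven v u h
    rw [SimpleGraph.adj_comm] at key
    have hcard : (Finset.univ.filter (fun i => θ i ≤ r u + r v)) =
        (Finset.univ.filter (fun i => θ i ≤ r v + r u)) :=
      Finset.filter_congr (fun x _ => by rw [add_comm (r u) (r v)])
    rw [key, hcard]
end

section
/- For every n ≥ 5, the cycle C_n is a 4-threshold graph; that is, there exist thresholds θ_1 < θ_2 < θ_3 < θ_4 and a rank function r on the vertices of C_n such that two distinct vertices are adjacent if and only if an odd number of the four thresholds are ≤ their rank sum. -/
noncomputable def Fr (n a : ℕ) : ℝ :=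
  if a % 2 = 0 then (n:ℝ) + (a/2 : ℕ) else -(n:ℝ) - (a/2 : ℕ)

noncomputable def Gr (n a : ℕ) : ℝ :=
  if a = n - 1 then (n:ℝ) + ((n-1)/2 : ℕ) - 1/2 else Fr n a

lemma Fr_even (n k : ℕ) : Fr n (2*k) = (n:ℝ) + k := by
  have h : (2*k) % 2 = 0 := by omega
  have h2 : (2*k) / 2 = k := by omega
  rw [Fr, if_pos h, h2]

lemma Fr_odd (n k : ℕ) : Fr n (2*k+1) = -(n:ℝ) - k := by
  have h : (2*k+1) % 2 ≠ 0 := by omega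
  have h2 : (2*k+1) / 2 = k := by omega
  rw [Fr, if_neg h, h2]

lemma Gr_top (m : ℕ) : Gr (2*m+1) (2*m) = (2*m+1:ℝ) + m - 1/2 := by
  have h : 2*m = (2*m+1) - 1 := by omega
  have h2 : ((2*m+1) - 1)/2 = m := by omega
  rw [Gr, if_pos h, h2]
  push_cast; ring

lemma Gr_ne (m a : ℕ) (h : a ≠ 2*m) : Gr (2*m+1) a = Fr (2*m+1) a := by
  rw [Gr, if_neg (by omega)]

-- nat extraction from real inequalities
lemma nat_lt_of_cast (x y : ℕ) (h : (x:ℝ) < (y:ℝ)) : x < y := by exact_mod_cast h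

lemma mixed_helper (m k j : ℕ) (hj : j < m) :
    ((-(m:ℝ)+1/2 ≤ (k:ℝ) - j ∧ (k:ℝ) - j < -(m:ℝ)+3/2) ∨
     ((-1/2:ℝ) ≤ (k:ℝ) - j ∧ (k:ℝ) - j < 3/2)) ↔
    (k = j ∨ k = j + 1 ∨ (k = 0 ∧ j + 1 = m)) := by
  constructor
  · rintro (⟨h1,h2⟩|⟨h1,h2⟩)
    · have e1 : j < k + m := nat_lt_of_cast _ _ (by push_cast; linarith)
      have e2 : k + m < j + 2 := nat_lt_of_cast _ _ (by push_cast; linarith)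
      omega
    · have e1 : j < k + 1 := nat_lt_of_cast _ _ (by push_cast; linarith)
      have e2 : k < j + 2 := nat_lt_of_cast _ _ (by push_cast; linarith)
      omega
  · rintro (rfl | rfl | ⟨rfl, hjm⟩)
    · right; norm_num
    · right; constructor <;> push_cast <;> linarith
    · left
      have hm : (m:ℝ) = (j:ℝ) + 1 := by exact_mod_cast hjm.symm
      constructor <;> push_cast <;> linarith

lemma even_main (m : ℕ) (hm : 3 ≤ m) (a b : ℕ) (ha : a < 2*m) (hb : b < 2*m) (hab : a ≠ b) :
    (a = b + 1 ∨ b = a + 1 ∨ (a = 0 ∧ b = 2*m - 1) ∨ (b = 0 ∧ a = 2*m - 1)) ↔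
      ((-(m:ℝ)+1/2 ≤ Fr (2*m) a + Fr (2*m) b ∧ Fr (2*m) a + Fr (2*m) b < -(m:ℝ)+3/2) ∨
       ((-1/2:ℝ) ≤ Fr (2*m) a + Fr (2*m) b ∧ Fr (2*m) a + Fr (2*m) b < 3/2)) := by
  have hmr : (3:ℝ) ≤ (m:ℝ) := by exact_mod_cast hm
  rcases Nat.even_or_odd a with ⟨k, hk⟩ | ⟨k, hk⟩ <;>
    rcases Nat.even_or_odd b with ⟨j, hj⟩ | ⟨j, hj⟩
  · -- both even
    subst hk; subst hj
    rw [show k + k = 2*k by ring, show j + j = 2*j by ring, Fr_even, Fr_even]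
    have hL : ¬(2*k = 2*j + 1 ∨ 2*j = 2*k + 1 ∨ (2*k = 0 ∧ 2*j = 2*m - 1) ∨
        (2*j = 0 ∧ 2*k = 2*m - 1)) := by omega
    constructor
    · intro h; omega
    · rintro (⟨_, h⟩ | ⟨_, h⟩) <;>
      · exfalso
        have hk0 : (0:ℝ) ≤ (k:ℝ) := Nat.cast_nonneg k
        have hj0 : (0:ℝ) ≤ (j:ℝ) := Nat.cast_nonneg j
        push_cast at h; linarith
  · -- a even, b odd
    subst hk; subst hj
    rw [show k + k = 2*k by ring, Fr_even, Fr_odd]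
    have hs : ((2*m:ℕ):ℝ) + k + (-((2*m:ℕ):ℝ) - j) = (k:ℝ) - j := by push_cast; ring
    rw [hs, mixed_helper m k j (by omega)]
    omega
  · -- a odd, b even
    subst hk; subst hj
    rw [show j + j = 2*j by ring, Fr_odd, Fr_even]
    have hs : -((2*m:ℕ):ℝ) - k + (((2*m:ℕ):ℝ) + j) = (j:ℝ) - k := by push_cast; ring
    rw [hs, mixed_helper m j k (by omega)]
    omega
  · -- both odd
    subst hk; subst hj
    rw [Fr_odd, Fr_odd]
    constructor
    · intro h; omega
    · rintro (⟨h, _⟩ | ⟨h, _⟩) <;>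
      · exfalso
        have hk0 : (0:ℝ) ≤ (k:ℝ) := Nat.cast_nonneg k
        have hj0 : (0:ℝ) ≤ (j:ℝ) := Nat.cast_nonneg j
        push_cast at h; linarith

lemma mixed2 (k j : ℕ) :
    ((-1/2:ℝ) ≤ (k:ℝ) - j ∧ (k:ℝ) - j < 3/2) ↔ (k = j ∨ k = j + 1) := by
  constructor
  · rintro ⟨h1, h2⟩
    have e1 : j < k + 1 := nat_lt_of_cast _ _ (by push_cast; linarith)
    have e2 : k < j + 2 := nat_lt_of_cast _ _ (by push_cast; linarith)
    omega
  · rintro (rfl | rfl)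
    · norm_num
    · constructor <;> push_cast <;> linarith

lemma odd_main (m : ℕ) (hm : 2 ≤ m) (a b : ℕ) (ha : a < 2*m+1) (hb : b < 2*m+1) (hab : a ≠ b) :
    (a = b + 1 ∨ b = a + 1 ∨ (a = 0 ∧ b = 2*m) ∨ (b = 0 ∧ a = 2*m)) ↔
      (((-1/2:ℝ) ≤ Gr (2*m+1) a + Gr (2*m+1) b ∧ Gr (2*m+1) a + Gr (2*m+1) b < 3/2) ∨
       (5*(m:ℝ)+5/4 ≤ Gr (2*m+1) a + Gr (2*m+1) b ∧ Gr (2*m+1) a + Gr (2*m+1) b < 5*(m:ℝ)+7/4)) := by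
  have hmr : (2:ℝ) ≤ (m:ℝ) := by exact_mod_cast hm
  by_cases haT : a = 2*m
  · subst haT
    have hbT : b ≠ 2*m := fun h => hab h.symm
    rw [Gr_top, Gr_ne m b hbT]
    rcases Nat.even_or_odd b with ⟨j, hj⟩ | ⟨j, hj⟩
    · -- b even, j < m
      subst hj
      have hjm : j < m := by omega
      rw [show j + j = 2*j by ring, Fr_even]
      rw [show (2*m+1:ℝ) + m - 1/2 + (((2*m+1:ℕ):ℝ) + j) = 5*(m:ℝ) + j + 3/2 by push_cast; ring]
      constructor
      · intro h
        have hj0 : j = 0 := by omega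
        subst hj0
        right; constructor <;> push_cast <;> linarith
      · rintro (⟨h1, h2⟩ | ⟨h1, h2⟩)
        · exfalso
          have : (0:ℝ) ≤ (j:ℝ) := Nat.cast_nonneg j
          linarith
        · have : j < 1 := nat_lt_of_cast _ _ (by push_cast; linarith)
          omega
    · -- b odd, j < m
      subst hj
      have hjm : j < m := by omega
      rw [Fr_odd]
      rw [show (2*m+1:ℝ) + m - 1/2 + (-((2*m+1:ℕ):ℝ) - j) = (m:ℝ) - j - 1/2 by push_cast; ring]
      constructor
      · intro h
        have hjm1 : j + 1 = m := by omega
        have : (m:ℝ) = (j:ℝ) + 1 := by exact_mod_cast hjm1.symm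
        left; constructor <;> linarith
      · rintro (⟨h1, h2⟩ | ⟨h1, h2⟩)
        · have : m < j + 2 := nat_lt_of_cast _ _ (by push_cast; linarith)
          omega
        · exfalso
          have : (0:ℝ) ≤ (j:ℝ) := Nat.cast_nonneg j
          linarith
  · by_cases hbT : b = 2*m
    · subst hbT
      rw [Gr_top, Gr_ne m a haT]
      rcases Nat.even_or_odd a with ⟨k, hk⟩ | ⟨k, hk⟩
      · subst hk
        have hkm : k < m := by omega
        rw [show k + k = 2*k by ring, Fr_even]
        rw [show (((2*m+1:ℕ)):ℝ) + k + ((2*m+1:ℝ) + m - 1/2) = 5*(m:ℝ) + k + 3/2 by push_cast; ring]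
        constructor
        · intro h
          have hk0 : k = 0 := by omega
          subst hk0
          right; constructor <;> push_cast <;> linarith
        · rintro (⟨h1, h2⟩ | ⟨h1, h2⟩)
          · exfalso
            have : (0:ℝ) ≤ (k:ℝ) := Nat.cast_nonneg k
            linarith
          · have : k < 1 := nat_lt_of_cast _ _ (by push_cast; linarith)
            omega
      · subst hk
        have hkm : k < m := by omega
        rw [Fr_odd]
        rw [show -((2*m+1:ℕ):ℝ) - k + ((2*m+1:ℝ) + m - 1/2) = (m:ℝ) - k - 1/2 by push_cast; ring]
        constructor
        · intro h
          have hkm1 : k + 1 = m := by omega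
          have : (m:ℝ) = (k:ℝ) + 1 := by exact_mod_cast hkm1.symm
          left; constructor <;> linarith
        · rintro (⟨h1, h2⟩ | ⟨h1, h2⟩)
          · have : m < k + 2 := nat_lt_of_cast _ _ (by push_cast; linarith)
            omega
          · exfalso
            have : (0:ℝ) ≤ (k:ℝ) := Nat.cast_nonneg k
            linarith
    · rw [Gr_ne m a haT, Gr_ne m b hbT]
      rcases Nat.even_or_odd a with ⟨k, hk⟩ | ⟨k, hk⟩ <;>
        rcases Nat.even_or_odd b with ⟨j, hj⟩ | ⟨j, hj⟩
      · -- both even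
        subst hk; subst hj
        have hkm : k < m := by omega
        have hjm : j < m := by omega
        rw [show k + k = 2*k by ring, show j + j = 2*j by ring, Fr_even, Fr_even]
        rw [show (((2*m+1:ℕ)):ℝ) + k + ((((2*m+1:ℕ)):ℝ) + j) = 4*(m:ℝ) + 2 + k + j by push_cast; ring]
        constructor
        · intro h; omega
        · rintro (⟨h1, h2⟩ | ⟨h1, h2⟩)
          · exfalso
            have hk0 : (0:ℝ) ≤ (k:ℝ) := Nat.cast_nonneg k
            have hj0 : (0:ℝ) ≤ (j:ℝ) := Nat.cast_nonneg j
            linarith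
          · exfalso
            have e1 : m < k + j + 1 := nat_lt_of_cast _ _ (by push_cast; linarith)
            have e2 : k + j < m := nat_lt_of_cast _ _ (by push_cast; linarith)
            omega
      · -- a even, b odd
        subst hk; subst hj
        have hkm : k < m := by omega
        have hkr : (k:ℝ) < m := by exact_mod_cast hkm
        rw [show k + k = 2*k by ring, Fr_even, Fr_odd]
        rw [show (((2*m+1:ℕ)):ℝ) + k + (-(((2*m+1:ℕ)):ℝ) - j) = (k:ℝ) - j by push_cast; ring]
        have hI2 : ¬(5*(m:ℝ)+5/4 ≤ (k:ℝ) - j ∧ (k:ℝ) - j < 5*(m:ℝ)+7/4) := by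
          rintro ⟨h1, _⟩
          have : (0:ℝ) ≤ (j:ℝ) := Nat.cast_nonneg j
          linarith
        rw [mixed2, iff_false_intro hI2, or_false]
        omega
      · -- a odd, b even
        subst hk; subst hj
        have hjm : j < m := by omega
        have hjr : (j:ℝ) < m := by exact_mod_cast hjm
        rw [show j + j = 2*j by ring, Fr_odd, Fr_even]
        rw [show -(((2*m+1:ℕ)):ℝ) - k + ((((2*m+1:ℕ)):ℝ) + j) = (j:ℝ) - k by push_cast; ring]
        have hI2 : ¬(5*(m:ℝ)+5/4 ≤ (j:ℝ) - k ∧ (j:ℝ) - k < 5*(m:ℝ)+7/4) := by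
          rintro ⟨h1, _⟩
          have : (0:ℝ) ≤ (k:ℝ) := Nat.cast_nonneg k
          linarith
        rw [mixed2, iff_false_intro hI2, or_false]
        omega
      · -- both odd
        subst hk; subst hj
        rw [Fr_odd, Fr_odd]
        rw [show -(((2*m+1:ℕ)):ℝ) - k + (-(((2*m+1:ℕ)):ℝ) - j) = -(4*(m:ℝ)) - 2 - k - j by push_cast; ring]
        constructor
        · intro h; omega
        · rintro (⟨h1, _⟩ | ⟨h1, _⟩) <;>
          · exfalso
            have hk0 : (0:ℝ) ≤ (k:ℝ) := Nat.cast_nonneg k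
            have hj0 : (0:ℝ) ≤ (j:ℝ) := Nat.cast_nonneg j
            linarith
open Classical in
lemma odd4 (θ : Fin 4 → ℝ) (hθ : StrictMono θ) (s : ℝ) :
    Odd ((Finset.univ.filter (fun i => θ i ≤ s)).card) ↔
      ((θ 0 ≤ s ∧ s < θ 1) ∨ (θ 2 ≤ s ∧ s < θ 3)) := by
  have h01 : θ 0 < θ 1 := hθ (by decide)
  have h12 : θ 1 < θ 2 := hθ (by decide)
  have h23 : θ 2 < θ 3 := hθ (by decide)
  rw [Finset.card_filter, Fin.sum_univ_four]
  by_cases h0 : θ 0 ≤ s <;> by_cases h1 : θ 1 ≤ s <;> by_cases h2 : θ 2 ≤ s <;>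
    by_cases h3 : θ 3 ≤ s <;>
    simp [h0, h1, h2, h3, Nat.odd_iff] <;>
    (try simp only [not_le] at h0) <;> (try simp only [not_le] at h1) <;>
    (try simp only [not_le] at h2) <;> (try simp only [not_le] at h3) <;>
    first | linarith | (left; linarith) | (right; linarith)

lemma mod_helper (n x : ℕ) (hx : x < 2*n) (hn : 1 < n) : x % n = 1 ↔ (x = 1 ∨ x = n + 1) := by
  rcases lt_or_ge x n with h | h
  · rw [Nat.mod_eq_of_lt h]; omega
  · rw [Nat.mod_eq_sub_mod h, Nat.mod_eq_of_lt (by omega)]; omega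

lemma adj_iff (n : ℕ) (hn : 5 ≤ n) (u v : Fin n) :
    (SimpleGraph.cycleGraph n).Adj u v ↔
      (u.val = v.val + 1 ∨ v.val = u.val + 1 ∨ (u.val = 0 ∧ v.val = n-1) ∨ (v.val = 0 ∧ u.val = n-1)) := by
  rw [SimpleGraph.cycleGraph_adj']
  have hu := u.isLt
  have hv := v.isLt
  rw [Fin.sub_def, Fin.sub_def]
  simp only
  rw [mod_helper n _ (by omega) (by omega), mod_helper n _ (by omega) (by omega)]
  omega

open Classical in
/-- For every n ≥ 5, Cₙ is a 4-threshold graph. -/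
theorem cn_four_threshold (n : ℕ) (hn : 5 ≤ n) :
    ∃ θ : Fin 4 → ℝ, StrictMono θ ∧ ∃ r : Fin n → ℝ, ∀ u v : Fin n, u ≠ v →
      ((SimpleGraph.cycleGraph n).Adj u v ↔
        Odd (Finset.univ.filter (fun i => θ i ≤ r u + r v)).card) := by
  rcases Nat.even_or_odd n with ⟨m, hm⟩ | ⟨m, hm⟩
  · -- n even
    have hm3 : 3 ≤ m := by omega
    have hn2 : n = 2*m := by omega
    subst hn2
    have hmr : (3:ℝ) ≤ (m:ℝ) := by exact_mod_cast hm3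
    have hθ : StrictMono (![-(m:ℝ)+1/2, -(m:ℝ)+3/2, -1/2, 3/2] : Fin 4 → ℝ) := by
      intro i j hij
      fin_cases i <;> fin_cases j <;> simp_all <;> norm_num <;>
        · have h2 : (2:ℝ) ≤ (m:ℝ) := by exact_mod_cast (by omega : 2 ≤ m)
          linarith
    refine ⟨_, hθ, fun i => Fr (2*m) i.val, fun u v huv => ?_⟩
    rw [adj_iff (2*m) hn u v, odd4 _ hθ]
    have key := even_main m hm3 u.val v.val u.isLt v.isLt
      (fun h => huv (Fin.ext h))
    exact key
  · -- n odd
    have hm2 : 2 ≤ m := by omega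
    have hn2 : n = 2*m+1 := by omega
    subst hn2
    have hmr : (2:ℝ) ≤ (m:ℝ) := by exact_mod_cast hm2
    have hθ : StrictMono (![-1/2, 3/2, 5*(m:ℝ)+5/4, 5*(m:ℝ)+7/4] : Fin 4 → ℝ) := by
      intro i j hij
      fin_cases i <;> fin_cases j <;> simp_all <;> norm_num <;>
        · have h2 : (2:ℝ) ≤ (m:ℝ) := by exact_mod_cast (by omega : 2 ≤ m)
          linarith
    refine ⟨_, hθ, fun i => Gr (2*m+1) i.val, fun u v huv => ?_⟩
    rw [adj_iff (2*m+1) hn u v, odd4 _ hθ]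
    have key := odd_main m hm2 u.val v.val u.isLt v.isLt
      (fun h => huv (Fin.ext h))
    exact key
end

section
/- Let r be a (θ_1, θ_2)-representation of a graph G (with θ_1 < θ_2). Suppose a, b, c, d are vertices such that ab and cd are edges while ac and bd are nonedges. Then exactly one of r(a)+r(c) and r(b)+r(d) is less than θ_1 and the other is at least θ_2; i.e., the two nonedge rank sums lie in different 'NO' regions. -/
/-- In a (θ₁,θ₂)-representation, given edges ab, cd and nonedges ac, bd,
the two nonedge rank sums lie in different NO regions. -/
theorem nonedges_in_different_no_regions {V : Type*} (G : SimpleGraph V)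
    (θ₁ θ₂ : ℝ) (hθ : θ₁ < θ₂) (r : V → ℝ)
    (hrep : ∀ u v : V, u ≠ v → (G.Adj u v ↔ θ₁ ≤ r u + r v ∧ r u + r v < θ₂))
    (a b c d : V) (hac : a ≠ c) (hbd : b ≠ d)
    (hab : G.Adj a b) (hcd : G.Adj c d)
    (hacn : ¬ G.Adj a c) (hbdn : ¬ G.Adj b d) :
    (r a + r c < θ₁ ∧ θ₂ ≤ r b + r d) ∨ (r b + r d < θ₁ ∧ θ₂ ≤ r a + r c) := by
  have h1 := (hrep a b hab.ne).mp hab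
  have h2 := (hrep c d hcd.ne).mp hcd
  have h3 : ¬ (θ₁ ≤ r a + r c ∧ r a + r c < θ₂) := fun h => hacn ((hrep a c hac).mpr h)
  have h4 : ¬ (θ₁ ≤ r b + r d ∧ r b + r d < θ₂) := fun h => hbdn ((hrep b d hbd).mpr h)
  push_neg at h3 h4
  rcases lt_or_ge (r a + r c) θ₁ with h | h
  · rcases lt_or_ge (r b + r d) θ₁ with h' | h'
    · linarith [h1.1, h1.2, h2.1, h2.2]
    · exact Or.inl ⟨h, h4 h'⟩
  · rcases lt_or_ge (r b + r d) θ₁ with h' | h'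
    · exact Or.inr ⟨h', h3 h⟩
    · have := h3 h; have := h4 h'; linarith [h1.1, h1.2, h2.1, h2.2]
end

section
/- For odd n ≥ 5, the cycle C_n is not a 2-threshold graph: there is no pair of thresholds θ_1 < θ_2 and rank function r such that two vertices of C_n are adjacent if and only if their rank sum lies in [θ_1, θ_2). -/
/-!
In a 2-threshold representation, the middle vertex `b` of an induced path `a - b - c` is a strict
local extremum of the rank: if `r a + r c < θ₁` it lies strictly above both neighbours, and if
`r a + r c ≥ θ₂` strictly below both. Along a cycle of length at least four every vertex is such a
middle vertex, so whether the rank increases from vertex `i` to vertex `i + 1` alternates with `i`. This is a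
proper 2-colouring of `Cₙ`, impossible for odd `n`.
-/

namespace SimpleGraph

open Fin.CommRing

def IsTwoThresholdRep {V : Type*} (G : SimpleGraph V) (θ₁ θ₂ : ℝ) (r : V → ℝ) : Prop :=
  ∀ u v, u ≠ v → (G.Adj u v ↔ θ₁ ≤ r u + r v ∧ r u + r v < θ₂)

theorem cycleGraph_adj_add_one {n : ℕ} (i : Fin (n + 2)) : (cycleGraph (n + 2)).Adj i (i + 1) :=
  cycleGraph_adj.2 (Or.inr (add_sub_cancel_left i 1))

theorem cycleGraph_not_adj_add_two {n : ℕ} (i : Fin (n + 4)) :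
    ¬(cycleGraph (n + 4)).Adj i (i + 2) := by
  rw [cycleGraph_adj]
  rintro (h | h)
  · have h3 : (3 : Fin (n + 4)) = 0 := by linear_combination -h
    simp [Fin.ext_iff, Nat.mod_eq_of_lt (show 3 < n + 4 by omega)] at h3
  · have h2 : (2 : Fin (n + 4)) = 1 := by linear_combination h
    simp [Fin.ext_iff, Nat.mod_eq_of_lt (show 2 < n + 4 by omega)] at h2

namespace IsTwoThresholdRep

theorem strictExtremum_of_induced_path {V : Type*} {G : SimpleGraph V} {θ₁ θ₂ : ℝ} {r : V → ℝ}
    (h : G.IsTwoThresholdRep θ₁ θ₂ r) {a b c : V}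
    (hab : G.Adj a b) (hbc : G.Adj b c) (hac : a ≠ c) (hnac : ¬G.Adj a c) :
    (r a < r b ∧ r c < r b) ∨ (r b < r a ∧ r b < r c) := by
  obtain ⟨hab₁, hab₂⟩ := (h a b hab.ne).1 hab
  obtain ⟨hbc₁, hbc₂⟩ := (h b c hbc.ne).1 hbc
  rcases lt_or_ge (r a + r c) θ₁ with hlo | hlo
  · exact Or.inl ⟨by linarith, by linarith⟩
  · have hhi : θ₂ ≤ r a + r c := not_lt.1 fun hhi => hnac ((h a c hac).2 ⟨hlo, hhi⟩)
    exact Or.inr ⟨by linarith, by linarith⟩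

variable {n : ℕ} {θ₁ θ₂ : ℝ} {r : Fin (n + 4) → ℝ}

theorem ascent_add_one_iff_not (h : (cycleGraph (n + 4)).IsTwoThresholdRep θ₁ θ₂ r)
    (i : Fin (n + 4)) : r (i + 1) < r (i + 1 + 1) ↔ ¬r i < r (i + 1) := by
  have hi₂ : i + 1 + 1 = i + 2 := by ring
  have hne : i ≠ i + 2 := by
    intro hi
    have h2 : (2 : Fin (n + 4)) = 0 := by linear_combination -hi
    simp [Fin.ext_iff, Nat.mod_eq_of_lt (show 2 < n + 4 by omega)] at h2
  rw [hi₂]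
  rcases h.strictExtremum_of_induced_path (cycleGraph_adj_add_one i)
    (hi₂ ▸ cycleGraph_adj_add_one (i + 1)) hne (cycleGraph_not_adj_add_two i) with
    ⟨hab, hcb⟩ | ⟨hba, hbc⟩
  · exact ⟨fun hbc => absurd hbc (lt_asymm hcb), fun hnab => absurd hab hnab⟩
  · exact ⟨fun _ => lt_asymm hba, fun _ => hbc⟩

noncomputable def ascentColoring (h : (cycleGraph (n + 4)).IsTwoThresholdRep θ₁ θ₂ r) :
    (cycleGraph (n + 4)).Coloring Bool :=
  Coloring.mk (fun i => decide (r i < r (i + 1))) fun {u v} huv => by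
    rcases cycleGraph_adj.1 huv with huv | huv
    · rw [sub_eq_iff_eq_add'.1 huv]
      simp only [ne_eq, decide_eq_decide, h.ascent_add_one_iff_not v, not_iff_self,
        not_false_eq_true]
    · rw [sub_eq_iff_eq_add'.1 huv]
      simp only [ne_eq, decide_eq_decide, h.ascent_add_one_iff_not u, iff_not_self,
        not_false_eq_true]

end IsTwoThresholdRep

end SimpleGraph

/-- For odd n ≥ 5, Cₙ is not a 2-threshold graph. -/
theorem cn_odd_not_two_threshold (n : ℕ) (hn : 5 ≤ n) (hodd : Odd n) :
    ¬ ∃ (θ₁ θ₂ : ℝ), θ₁ < θ₂ ∧ ∃ r : Fin n → ℝ, ∀ u v : Fin n, u ≠ v →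
      ((SimpleGraph.cycleGraph n).Adj u v ↔ θ₁ ≤ r u + r v ∧ r u + r v < θ₂) := by
  rintro ⟨θ₁, θ₂, -, r, hr⟩
  obtain ⟨m, rfl⟩ : ∃ m, n = m + 4 := ⟨n - 4, by omega⟩
  have hχ : (SimpleGraph.cycleGraph (m + 4)).chromaticNumber ≤ 2 :=
    (SimpleGraph.IsTwoThresholdRep.ascentColoring hr).colorable.chromaticNumber_le
  rw [SimpleGraph.chromaticNumber_cycleGraph_of_odd _ (by omega) hodd] at hχ
  exact absurd hχ (by decide)
end

section
/- For n ≥ 5 with n ≡ 2 (mod 4), the cycle C_n is not a 2-threshold graph. -/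
/-!
Write `n = 2m` with `m` odd, `m ≥ 3`. The antipodal pairs `{k, k + m}` are non-edges, so each
antipodal sum `s k = r k + r (k + m)` lies below `θ₁` or at least at `θ₂`. But `s k + s (k + 1)` is
the sum of the edge sums at `k` and at `k + m`, hence lies in `[2θ₁, 2θ₂)`, so consecutive antipodal
sums lie on opposite sides. Since `s (k + m) = s k` and `m` is odd, this is impossible.
-/

open Fin.CommRing

theorem Nat.iff_even_of_forall_succ_iff_not {p : ℕ → Prop} (h : ∀ k, p (k + 1) ↔ ¬ p k)
    (j : ℕ) : p j ↔ (p 0 ↔ Even j) := by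
  induction j with
  | zero => simp
  | succ j ih => rw [h, Nat.even_add_one]; tauto

theorem lt_iff_not_lt_of_add_eq_add_of_notMem_Ico {α : Type*} [AddCommMonoid α] [LinearOrder α]
    [IsOrderedCancelAddMonoid α] {x y a b c d : α} (ha : a ∉ Set.Ico x y) (hb : b ∉ Set.Ico x y)
    (hc : c ∈ Set.Ico x y) (hd : d ∈ Set.Ico x y) (h : a + b = c + d) : a < x ↔ ¬ b < x := by
  rw [Set.mem_Ico, not_and_or, not_le, not_lt] at ha hb
  rw [Set.mem_Ico] at hc hd
  constructor
  · intro hax hbx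
    exact (add_lt_add hax hbx).not_ge (h ▸ add_le_add hc.1 hd.1)
  · intro hbx
    by_contra hax
    have hay := ha.resolve_left hax
    have hby := hb.resolve_left hbx
    exact (add_le_add hay hby).not_gt (h ▸ add_lt_add hc.2 hd.2)

theorem Fin.natCast_add_sub_natCast {n : ℕ} [NeZero n] (k d : ℕ) :
    ((k + d : ℕ) : Fin n) - k = d := by
  push_cast; ring

theorem Fin.natCast_ne_zero_of_pos_of_lt {n d : ℕ} [NeZero n] (hd0 : 0 < d) (hd : d < n) :
    (d : Fin n) ≠ 0 := by
  rw [Ne, Fin.natCast_eq_zero]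
  exact fun hdvd => (Nat.le_of_dvd hd0 hdvd).not_gt hd

theorem Fin.natCast_ne_natCast_add {n : ℕ} [NeZero n] (k : ℕ) {d : ℕ} (hd0 : 0 < d)
    (hd : d < n) : (k : Fin n) ≠ ((k + d : ℕ) : Fin n) := fun h =>
  Fin.natCast_ne_zero_of_pos_of_lt hd0 hd (by rw [← Fin.natCast_add_sub_natCast k, ← h, sub_self])

namespace SimpleGraph

theorem cycleGraph_adj_natCast_add_iff {n : ℕ} [NeZero n] (k : ℕ) {d : ℕ} (hd0 : 0 < d)
    (hd : d < n) : (cycleGraph n).Adj (k : Fin n) ((k + d : ℕ) : Fin n) ↔ d = 1 ∨ d + 1 = n := by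
  rw [cycleGraph_adj', ← neg_sub, Fin.natCast_add_sub_natCast, Fin.val_neg,
    if_neg (Fin.natCast_ne_zero_of_pos_of_lt hd0 hd), Fin.val_cast_of_lt hd]
  omega

theorem cycleGraph_chord_sum_lt_iff_not {n d : ℕ} [NeZero n] (hd1 : 1 < d) (hd : d + 1 < n)
    {θ₁ θ₂ : ℝ} {r : Fin n → ℝ}
    (hr : ∀ u v : Fin n, u ≠ v → ((cycleGraph n).Adj u v ↔ θ₁ ≤ r u + r v ∧ r u + r v < θ₂))
    (k : ℕ) : r ↑(k + 1) + r ↑(k + 1 + d) < θ₁ ↔ ¬ r k + r ↑(k + d) < θ₁ := by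
  have edge (j : ℕ) : r j + r ↑(j + 1) ∈ Set.Ico θ₁ θ₂ :=
    (hr _ _ (Fin.natCast_ne_natCast_add j one_pos (by omega))).mp
      ((cycleGraph_adj_natCast_add_iff j one_pos (by omega)).mpr (Or.inl rfl))
  have chord (j : ℕ) : r j + r ↑(j + d) ∉ Set.Ico θ₁ θ₂ := fun hj =>
    absurd ((hr _ _ (Fin.natCast_ne_natCast_add j (by omega) (by omega))).mpr hj)
      ((cycleGraph_adj_natCast_add_iff j (by omega) (by omega)).not.mpr (by omega))
  refine lt_iff_not_lt_of_add_eq_add_of_notMem_Ico (chord (k + 1)) (chord k) (edge k)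
    (edge (k + d)) ?_
  rw [Nat.add_right_comm]
  ring

end SimpleGraph

/-- For n ≥ 5 with n ≡ 2 (mod 4), Cₙ is not a 2-threshold graph. -/
theorem cn_two_mod_four_not_two_threshold (n : ℕ) (hn : 5 ≤ n) (hmod : n % 4 = 2) :
    ¬ ∃ (θ₁ θ₂ : ℝ), θ₁ < θ₂ ∧ ∃ r : Fin n → ℝ, ∀ u v : Fin n, u ≠ v →
      ((SimpleGraph.cycleGraph n).Adj u v ↔ θ₁ ≤ r u + r v ∧ r u + r v < θ₂) := by
  rintro ⟨θ₁, θ₂, -, r, hr⟩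
  have : NeZero n := ⟨by omega⟩
  obtain ⟨m, hnm, hm⟩ : ∃ m, n = m + m ∧ Odd m := ⟨n / 2, by omega, Nat.odd_iff.mpr (by omega)⟩
  set p : ℕ → Prop := fun k => r k + r ↑(k + m) < θ₁
  have halt : ∀ k, p (k + 1) ↔ ¬ p k :=
    SimpleGraph.cycleGraph_chord_sum_lt_iff_not (by omega) (by omega) hr
  have hper : p m ↔ p 0 := by
    have hwrap : ((m + m : ℕ) : Fin n) = 0 := by rw [← hnm, Fin.natCast_self]
    simp only [p, hwrap, Nat.cast_zero, zero_add]
    rw [add_comm]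
  have hparity := Nat.iff_even_of_forall_succ_iff_not halt m
  rw [hper] at hparity
  exact Nat.not_even_iff_odd.mpr hm (by tauto)
end

section
/- For n ≥ 5 with n ≡ 0 (mod 4), the cycle C_n is not a 2-threshold graph. -/
/-!
Put `d i = r (i + 2) - r i`. The edges `{i, i + 1}`, `{i + 2, i + 3}` and the non-edge
`{i, i + 3}` force `d i * d (i + 1) < 0`: according as `r i + r (i + 3)` falls below `θ₁` or
reaches `θ₂`, it is smaller or larger than both edge sums. So `d i` and `d (i + 2)` have the same
sign, and `r 0, r 2, r 4, …` is strictly monotone; but it returns to `r 0` after `n` steps.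
-/
open Finset Set

theorem sub_mul_sub_neg_of_mem_Ico {θ₁ θ₂ p q s t : ℝ} (hpq : p + q ∈ Ico θ₁ θ₂)
    (hst : s + t ∈ Ico θ₁ θ₂) (hpt : p + t ∉ Ico θ₁ θ₂) : (s - p) * (t - q) < 0 := by
  simp only [Set.mem_Ico, not_and, not_lt] at hpq hst hpt
  rcases lt_or_ge (p + t) θ₁ with h | h
  · exact mul_neg_of_pos_of_neg (by linarith) (by linarith)
  · exact mul_neg_of_neg_of_pos (by linarith [hpt h]) (by linarith [hpt h])

theorem sum_range_ne_zero_of_mul_succ_pos {f : ℕ → ℝ} (hf : ∀ k, 0 < f k * f (k + 1)) {n : ℕ}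
    (hn : n ≠ 0) : ∑ k ∈ range n, f k ≠ 0 := by
  have hsign : ∀ k, 0 < f 0 * f k := by
    intro k
    induction k with
    | zero => exact mul_self_pos.mpr (left_ne_zero_of_mul (hf 0).ne')
    | succ k ih => nlinarith [hf k, sq_nonneg (f k)]
  intro hsum
  have hpos : 0 < ∑ k ∈ range n, f 0 * f k :=
    sum_pos (fun k _ ↦ hsign k) (nonempty_range_iff.mpr hn)
  rw [← mul_sum, hsum, mul_zero] at hpos
  exact hpos.false

section
variable {G : Type*} [AddCommMonoid G] {r : G → ℝ} {θ₁ θ₂ : ℝ} {a : G}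

theorem sub_mul_sub_pos_of_forall_mem_Ico (hedge : ∀ i, r i + r (i + a) ∈ Ico θ₁ θ₂)
    (hgap : ∀ i, r i + r (i + 3 • a) ∉ Ico θ₁ θ₂) (i : G) :
    0 < (r (i + 2 • a) - r i) * (r (i + 4 • a) - r (i + 2 • a)) := by
  have e₁ := hedge (i + a)
  have e₂ := hedge (i + 2 • a)
  have e₃ := hedge (i + 3 • a)
  have g₁ := hgap (i + a)
  rw [show i + a + a = i + 2 • a by abel] at e₁
  rw [show i + 2 • a + a = i + 3 • a by abel] at e₂
  rw [show i + 3 • a + a = i + 4 • a by abel] at e₃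
  rw [show i + a + 3 • a = i + 4 • a by abel] at g₁
  have h₁ := sub_mul_sub_neg_of_mem_Ico (hedge i) e₂ (hgap i)
  have h₂ := sub_mul_sub_neg_of_mem_Ico e₁ e₃ g₁
  nlinarith [sq_nonneg (r (i + 3 • a) - r (i + a))]

theorem exists_add_three_nsmul_mem_Ico {n : ℕ} (hn : n ≠ 0) (ha : n • a = 0)
    (hedge : ∀ i, r i + r (i + a) ∈ Ico θ₁ θ₂) : ∃ i, r i + r (i + 3 • a) ∈ Ico θ₁ θ₂ := by
  by_contra! hgap
  set g : ℕ → ℝ := fun k ↦ r (k • (2 • a))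
  have hstep : ∀ k, 0 < (g (k + 1) - g k) * (g (k + 1 + 1) - g (k + 1)) := by
    intro k
    have := sub_mul_sub_pos_of_forall_mem_Ico hedge hgap (k • (2 • a))
    simp only [g, add_nsmul, one_nsmul]
    convert this using 4
    abel
  apply sum_range_ne_zero_of_mul_succ_pos hstep hn
  rw [sum_range_sub g]
  simp only [g, zero_nsmul]
  rw [nsmul_left_comm, ha, nsmul_zero, sub_self]

end

namespace SimpleGraph

def IsTwoThreshold {V : Type*} (H : SimpleGraph V) : Prop :=
  ∃ θ₁ θ₂ : ℝ, θ₁ < θ₂ ∧ ∃ r : V → ℝ, ∀ u v, u ≠ v → (H.Adj u v ↔ r u + r v ∈ Ico θ₁ θ₂)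

theorem not_isTwoThreshold_circulantGraph_singleton {G : Type*} [AddCommGroup G] {a : G}
    (ha : 5 ≤ addOrderOf a) : ¬ (circulantGraph {a}).IsTwoThreshold := by
  rintro ⟨θ₁, θ₂, -, r, hr⟩
  have hsmul : ∀ k, k ≠ 0 → k < 5 → k • a ≠ 0 := fun k hk hk5 ↦
    nsmul_ne_zero_of_lt_addOrderOf hk (by omega)
  have ha₀ : a ≠ 0 := by simpa using hsmul 1 one_ne_zero (by norm_num)
  have hedge : ∀ i, r i + r (i + a) ∈ Ico θ₁ θ₂ := fun i ↦
    (hr i (i + a) (by simpa using ha₀)).mp (by simpa using ha₀)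
  have hgap : ∀ i, ¬ (circulantGraph {a}).Adj i (i + 3 • a) := by
    intro i
    simp only [circulantGraph_adj, mem_singleton_iff, add_sub_cancel_left, sub_add_cancel_left,
      not_and, not_or]
    refine fun _ ↦ ⟨fun h ↦ hsmul 4 (by norm_num) (by norm_num) ?_,
      fun h ↦ hsmul 2 (by norm_num) (by norm_num) ?_⟩
    · rw [neg_eq_iff_add_eq_zero] at h
      rw [← h]
      abel
    · rw [← sub_eq_zero] at h
      rw [← h]
      abel
  obtain ⟨i, hi⟩ := exists_add_three_nsmul_mem_Ico (by omega) (addOrderOf_nsmul_eq_zero a) hedge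
  exact hgap i ((hr i _ (by simpa using hsmul 3 (by norm_num) (by norm_num))).mpr hi)

end SimpleGraph

theorem cn_zero_mod_four_not_two_threshold_general (n : ℕ) (hn : 5 ≤ n) :
    ¬ ∃ (θ₁ θ₂ : ℝ), θ₁ < θ₂ ∧ ∃ r : Fin n → ℝ, ∀ u v : Fin n, u ≠ v →
      ((SimpleGraph.cycleGraph n).Adj u v ↔ θ₁ ≤ r u + r v ∧ r u + r v < θ₂) := by
  obtain ⟨m, rfl⟩ : ∃ m, n = m + 1 := ⟨n - 1, by omega⟩
  -- `ZMod (m + 1)` is `Fin (m + 1)` by definition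
  have h1 : addOrderOf (1 : Fin (m + 1)) = m + 1 := ZMod.addOrderOf_one (m + 1)
  rw [SimpleGraph.cycleGraph_eq_circulantGraph]
  exact SimpleGraph.not_isTwoThreshold_circulantGraph_singleton (hn.trans_eq h1.symm)

/-- For n ≥ 5 with n ≡ 0 (mod 4), Cₙ is not a 2-threshold graph. -/
theorem cn_zero_mod_four_not_two_threshold (n : ℕ) (hn : 5 ≤ n) (hmod : n % 4 = 0) :
    ¬ ∃ (θ₁ θ₂ : ℝ), θ₁ < θ₂ ∧ ∃ r : Fin n → ℝ, ∀ u v : Fin n, u ≠ v →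
      ((SimpleGraph.cycleGraph n).Adj u v ↔ θ₁ ≤ r u + r v ∧ r u + r v < θ₂) :=
  cn_zero_mod_four_not_two_threshold_general n hn
end

section
/- Let r be a (θ_1, θ_2, θ_3)-representation of the cycle C_n with n ≥ 5, and suppose v_i v_{i+1} and v_j v_{j+1} are two vertex-disjoint edges of C_n. Then r(v_i)+r(v_{i+1}) and r(v_j)+r(v_{j+1}) cannot both be ≥ θ_3 (i.e., both edge rank sums cannot lie in the larger YES region). -/
/-- In a (θ₁,θ₂,θ₃)-representation of Cₙ (n ≥ 5), two vertex-disjoint edges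
v_i v_{i+1} and v_j v_{j+1} cannot both have rank sums in the larger YES region. -/
theorem disjoint_edges_not_both_larger_yes (n : ℕ) [NeZero n] (hn : 5 ≤ n)
    (θ₁ θ₂ θ₃ : ℝ) (h12 : θ₁ < θ₂) (h23 : θ₂ < θ₃) (r : Fin n → ℝ)
    (hrep : ∀ u v : Fin n, u ≠ v →
      ((SimpleGraph.cycleGraph n).Adj u v ↔
        (θ₁ ≤ r u + r v ∧ r u + r v < θ₂) ∨ θ₃ ≤ r u + r v))
    (i j : Fin n)
    (hij : i ≠ j) (hij1 : i ≠ j + 1) (hi1j : i + 1 ≠ j) (hi1j1 : i + 1 ≠ j + 1) :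
    ¬ (θ₃ ≤ r i + r (i + 1) ∧ θ₃ ≤ r j + r (j + 1)) := by
  rintro ⟨h1, h2⟩
  have hone : (1 : Fin n).val = 1 := by
    have : 1 % n = 1 := Nat.mod_eq_of_lt (by omega)
    simpa [Fin.val_one'] using this
  have nonadj : ∀ u v : Fin n, u ≠ v + 1 → v ≠ u + 1 → ¬(SimpleGraph.cycleGraph n).Adj u v := by
    intro u v huv hvu hadj
    rw [SimpleGraph.cycleGraph_adj'] at hadj
    rcases hadj with h | h
    · have hs : u - v = 1 := Fin.ext (by rw [h, hone])
      exact huv ((eq_add_of_sub_eq hs).trans (add_comm 1 v))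
    · have hs : v - u = 1 := Fin.ext (by rw [h, hone])
      exact hvu ((eq_add_of_sub_eq hs).trans (add_comm 1 u))
  have na1 : ¬(SimpleGraph.cycleGraph n).Adj i j := nonadj i j hij1 (fun h => hi1j h.symm)
  have na2 : ¬(SimpleGraph.cycleGraph n).Adj (i + 1) (j + 1) := by
    apply nonadj
    · intro h
      exact hij1 (add_right_cancel h)
    · intro h
      exact hi1j (add_right_cancel h).symm
  rw [hrep i j hij] at na1
  rw [hrep (i+1) (j+1) hi1j1] at na2
  push_neg at na1 na2
  linarith [na1.2, na2.2]
end

section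
/- For every n ≥ 5, the cycle C_n is not a 3-threshold graph: there are no thresholds θ_1 < θ_2 < θ_3 and rank function r such that two vertices of C_n are adjacent if and only if their rank sum lies in [θ_1, θ_2) ∪ [θ_3, ∞). -/
/-!
A sum is at least an odd number of the thresholds iff it lies in `[θ₁, θ₂) ∪ [θ₃, ∞)`, so four
sums `s₁ ≤ s₂ ≤ s₃ ≤ s₄` cannot be edge, non-edge, edge, non-edge. Along a path
`x₁ ~ x₂ ≁ x₃ ~ x₄ ≁ x₅` with `r x₁ ≤ r x₃`, `r x₂ ≤ r x₄`, `r x₃ ≤ r x₅` the consecutive pair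
sums increase, so such a configuration cannot occur. Rotating and reflecting `C_n`, we may put a
minimum of `r` at `0` and a maximum at some `k ≤ n - 3`; the forbidden configuration is then found
among `0, ±1, k, k + 1, k + 2`, according as `r (-1) ≤ r (k + 1)` or not.
-/

open SimpleGraph Set

theorem mem_Ico_union_Ici_of_alternating {α : Type*} [LinearOrder α] {θ₁ θ₂ θ₃ s₁ s₂ s₃ s₄ : α}
    (h₁ : s₁ ∈ Ico θ₁ θ₂ ∪ Ici θ₃) (h₂ : s₂ ∉ Ico θ₁ θ₂ ∪ Ici θ₃)
    (h₃ : s₃ ∈ Ico θ₁ θ₂ ∪ Ici θ₃) (h₁₂ : s₁ ≤ s₂) (h₂₃ : s₂ ≤ s₃) (h₃₄ : s₃ ≤ s₄) :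
    s₄ ∈ Ico θ₁ θ₂ ∪ Ici θ₃ := by
  simp only [mem_union, mem_Ico, mem_Ici, not_or, not_and, not_lt] at *
  obtain ⟨h₂, -⟩ := h₂
  right
  rcases h₁ with ⟨h₁, -⟩ | h₁
  · rcases h₃ with ⟨-, h₃⟩ | h₃
    · exact absurd (h₂ (h₁.trans h₁₂)) (h₂₃.trans_lt h₃).not_ge
    · exact h₃.trans h₃₄
  · exact h₁.trans (h₁₂.trans (h₂₃.trans h₃₄))

theorem Fin.val_sub_add_val_sub {n : ℕ} {a b : Fin n} (h : a ≠ b) :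
    (a - b).val + (b - a).val = n := by
  rcases lt_or_gt_of_ne h with h | h
  · rw [Fin.coe_sub_iff_lt.2 h, Fin.coe_sub_iff_le.2 h.le]; omega
  · rw [Fin.coe_sub_iff_lt.2 h, Fin.coe_sub_iff_le.2 h.le]; omega

namespace SimpleGraph

/-- For `θ₁ < θ₂ < θ₃`, this says that `r` represents `G` as a 3-threshold graph. -/
def IsThreeThresholdRep {V : Type*} (G : SimpleGraph V) (θ₁ θ₂ θ₃ : ℝ) (r : V → ℝ) : Prop :=
  ∀ u v, u ≠ v → (G.Adj u v ↔ r u + r v ∈ Ico θ₁ θ₂ ∪ Ici θ₃)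

namespace IsThreeThresholdRep

variable {V W : Type*} {G : SimpleGraph V} {θ₁ θ₂ θ₃ : ℝ} {r : V → ℝ}

theorem comap (hr : G.IsThreeThresholdRep θ₁ θ₂ θ₃ r) {H : SimpleGraph W} (f : H ↪g G) :
    H.IsThreeThresholdRep θ₁ θ₂ θ₃ (r ∘ f) := fun u v huv =>
  f.map_adj_iff.symm.trans (hr (f u) (f v) (f.injective.ne huv))

theorem adj_of_alternating (hr : G.IsThreeThresholdRep θ₁ θ₂ θ₃ r) {x₁ x₂ x₃ x₄ x₅ : V}
    (h₁₂ : G.Adj x₁ x₂) (h₂₃ : ¬G.Adj x₂ x₃) (h₂₃' : x₂ ≠ x₃) (h₃₄ : G.Adj x₃ x₄) (h₄₅ : x₄ ≠ x₅)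
    (h₁₃ : r x₁ ≤ r x₃) (h₂₄ : r x₂ ≤ r x₄) (h₃₅ : r x₃ ≤ r x₅) : G.Adj x₄ x₅ :=
  (hr x₄ x₅ h₄₅).2 <| mem_Ico_union_Ici_of_alternating ((hr x₁ x₂ h₁₂.ne).1 h₁₂)
    (mt (hr x₂ x₃ h₂₃').2 h₂₃) ((hr x₃ x₄ h₃₄.ne).1 h₃₄) (by linarith) (by linarith) (by linarith)

end IsThreeThresholdRep

theorem cycleGraph_adj_iff_val_s14 {n : ℕ} (hn : 2 ≤ n) {u v : Fin n} :
    (cycleGraph n).Adj u v ↔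
      u.val + 1 = v.val ∨ v.val + 1 = u.val ∨ u.val + n = v.val + 1 ∨ v.val + n = u.val + 1 := by
  rw [cycleGraph_adj']
  rcases lt_trichotomy u v with h | rfl | h
  · rw [Fin.coe_sub_iff_lt.2 h, Fin.coe_sub_iff_le.2 h.le]; omega
  · rw [Fin.coe_sub_iff_le.2 le_rfl]; omega
  · rw [Fin.coe_sub_iff_lt.2 h, Fin.coe_sub_iff_le.2 h.le]; omega

def cycleGraphAddLeftIso {n : ℕ} [NeZero n] (c : Fin n) : cycleGraph n ≃g cycleGraph n where
  toEquiv := Equiv.addLeft c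
  map_rel_iff' := by simp [cycleGraph_adj']

def cycleGraphSubLeftIso {n : ℕ} [NeZero n] (c : Fin n) : cycleGraph n ≃g cycleGraph n where
  toEquiv := Equiv.subLeft c
  map_rel_iff' := by simp [cycleGraph_adj', or_comm]

theorem not_isThreeThresholdRep_cycleGraph_of_extrema {n : ℕ} [NeZero n] (hn : 5 ≤ n)
    {θ₁ θ₂ θ₃ : ℝ} {r : Fin n → ℝ} {k : Fin n} (h₀ : ∀ x, r 0 ≤ r x) (hk : ∀ x, r x ≤ r k)
    (hk₃ : k.val + 3 ≤ n) : ¬(cycleGraph n).IsThreeThresholdRep θ₁ θ₂ θ₃ r := by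
  intro hr
  have hadj (u v : Fin n) := cycleGraph_adj_iff_val_s14 (u := u) (v := v) (by omega : 2 ≤ n)
  let last : Fin n := ⟨n - 1, by omega⟩
  let one : Fin n := ⟨1, by omega⟩
  rcases Nat.eq_zero_or_pos k.val with hk₀ | hk_pos
  · obtain rfl : k = 0 := Fin.ext hk₀
    refine absurd (hr.adj_of_alternating (x₁ := 0) (x₂ := one) (x₃ := last) (x₅ := ⟨2, by omega⟩)
      ?_ ?_ ?_ ?_ ?_ (h₀ last) (hk one) ((hk last).trans (h₀ _))) ?_ <;>
    grind [Fin.ext_iff]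
  let p : Fin n := ⟨k.val + 1, by omega⟩
  by_cases hp : r last ≤ r p
  · refine absurd (hr.adj_of_alternating (x₁ := last) (x₂ := 0) (x₄ := ⟨k.val + 2, by omega⟩)
      ?_ ?_ ?_ ?_ ?_ hp (h₀ _) (hk p)) ?_ <;>
    grind [Fin.ext_iff]
  · obtain ⟨a, h₀a, hap, hap'⟩ :
        ∃ a, (cycleGraph n).Adj 0 a ∧ ¬(cycleGraph n).Adj a p ∧ a ≠ p := by
      by_cases hk₁ : k.val = 1
      · exact ⟨last, by grind [Fin.ext_iff]⟩
      · exact ⟨one, by grind [Fin.ext_iff]⟩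
    refine absurd (hr.adj_of_alternating h₀a hap hap' (x₅ := last) ?_ ?_ (h₀ p) (hk a)
      (le_of_not_ge hp)) ?_ <;>
    grind [Fin.ext_iff]

theorem not_isThreeThresholdRep_cycleGraph {n : ℕ} (hn : 5 ≤ n) (θ₁ θ₂ θ₃ : ℝ)
    (r : Fin n → ℝ) : ¬(cycleGraph n).IsThreeThresholdRep θ₁ θ₂ θ₃ r := by
  intro hr
  have : NeZero n := ⟨by omega⟩
  obtain ⟨m, hm⟩ := Finite.exists_min r
  obtain ⟨M, hM⟩ := Finite.exists_max r
  have hsub : (M - m).val + 3 ≤ n ∨ (m - M).val + 3 ≤ n := by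
    rcases eq_or_ne M m with rfl | hne
    · left; rw [sub_self, Fin.val_zero]; omega
    · have := Fin.val_sub_add_val_sub hne; omega
  rcases hsub with h | h
  · exact not_isThreeThresholdRep_cycleGraph_of_extrema hn (k := M - m)
      (by simp [cycleGraphAddLeftIso, hm]) (by simp [cycleGraphAddLeftIso, hM]) h
      (hr.comap (cycleGraphAddLeftIso m).toEmbedding)
  · exact not_isThreeThresholdRep_cycleGraph_of_extrema hn (k := m - M)
      (by simp [cycleGraphSubLeftIso, hm]) (by simp [cycleGraphSubLeftIso, hM]) h
      (hr.comap (cycleGraphSubLeftIso m).toEmbedding)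

end SimpleGraph

/-- For every n ≥ 5, Cₙ is not a 3-threshold graph. -/
theorem cn_not_three_threshold (n : ℕ) (hn : 5 ≤ n) :
    ¬ ∃ (θ₁ θ₂ θ₃ : ℝ), θ₁ < θ₂ ∧ θ₂ < θ₃ ∧ ∃ r : Fin n → ℝ,
      ∀ u v : Fin n, u ≠ v →
        ((SimpleGraph.cycleGraph n).Adj u v ↔
          (θ₁ ≤ r u + r v ∧ r u + r v < θ₂) ∨ θ₃ ≤ r u + r v) := by
  rintro ⟨θ₁, θ₂, θ₃, -, -, r, hr⟩
  exact not_isThreeThresholdRep_cycleGraph hn θ₁ θ₂ θ₃ r hr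
end

section
/- The threshold number of the cycle C_n is 1 if n = 3, 2 if n = 4, and 4 if n ≥ 5. -/
open Classical in
/-- A graph is a k-threshold graph if there are thresholds θ₁ < ... < θ_k and
ranks r with uv an edge iff an odd number of thresholds are ≤ r u + r v. -/
def IsKThresholdGraph {V : Type*} (G : SimpleGraph V) (k : ℕ) : Prop :=
  ∃ θ : Fin k → ℝ, StrictMono θ ∧ ∃ r : V → ℝ, ∀ u v : V, u ≠ v →
    (G.Adj u v ↔ Odd (Finset.univ.filter (fun i => θ i ≤ r u + r v)).card)

/-!
For `n ≥ 5`, read the ranks around `Cₙ` as an `n`-periodic sequence `w : ℤ → ℝ`. With three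
thresholds the edge sums are those in `[θ₁, θ₂) ∪ [θ₃, ∞)`. An edge with sum `≥ θ₃` is impossible:
the non-edges at distance 2 and 3 from its larger endpoint force the nearby ranks below its smaller
endpoint, and comparing a few edge and non-edge sums yields a contradiction. Hence every edge sum
lies in `[θ₁, θ₂)`; as `w k + w (k + 3)` does not, `w (k + 2) - w k` and `w (k + 3) - w (k + 1)`
have opposite signs for every `k`, so `j ↦ w (2 j)` is strictly monotone, against periodicity.

Four thresholds suffice: the ranks `2 (-1)ʲ j` realise the path `0, …, n - 2` with the window
`[-2, 3)`, and the odd rank `X = 1 - 2 (-1)ⁿ (n - 2)` of the last vertex meets vertex `n - 2` in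
that window and vertex `0` in the window `[X, X + 1)`, which contains no other sum.
-/

open Finset SimpleGraph

theorem odd_card_filter_le_iff_succ {k : ℕ} {θ : Fin (k + 1) → ℝ} (hθ : Monotone θ) (s : ℝ) :
    Odd #{i | θ i ≤ s} ↔ θ 0 ≤ s ∧ ¬Odd #{i : Fin k | θ i.succ ≤ s} := by
  rw [Fin.card_filter_univ_succ]
  split_ifs with h0
  · simp [h0, Nat.odd_add_one]
  · have : #{i : Fin k | θ i.succ ≤ s} = 0 :=
      card_eq_zero.2 (filter_eq_empty_iff.2 fun i _ hi => h0 ((hθ (Fin.zero_le _)).trans hi))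
    simp [h0, this]

theorem odd_card_filter_le_iff_one (θ : Fin 1 → ℝ) (s : ℝ) :
    Odd #{i | θ i ≤ s} ↔ θ 0 ≤ s := by
  rw [odd_card_filter_le_iff_succ (Subsingleton.monotone θ)]
  simp

theorem odd_card_filter_le_iff_two {θ : Fin 2 → ℝ} (hθ : StrictMono θ) (s : ℝ) :
    Odd #{i | θ i ≤ s} ↔ s ∈ Set.Ico (θ 0) (θ 1) := by
  rw [odd_card_filter_le_iff_succ hθ.monotone, odd_card_filter_le_iff_one (fun i => θ i.succ)]
  simp

theorem odd_card_filter_le_iff_three {θ : Fin 3 → ℝ} (hθ : StrictMono θ) (s : ℝ) :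
    Odd #{i | θ i ≤ s} ↔ s ∈ Set.Ico (θ 0) (θ 1) ∪ Set.Ici (θ 2) := by
  have h01 : θ 0 < θ 1 := hθ (by decide)
  have h12 : θ 1 < θ 2 := hθ (by decide)
  rw [odd_card_filter_le_iff_succ hθ.monotone,
    odd_card_filter_le_iff_two (θ := fun i => θ i.succ) (hθ.comp Fin.strictMono_succ)]
  simp only [Set.mem_union, Set.mem_Ico, Set.mem_Ici, not_and, not_lt, Fin.succ_zero_eq_one,
    Fin.succ_one_eq_two]
  grind

theorem odd_card_filter_le_iff_four {θ : Fin 4 → ℝ} (hθ : StrictMono θ) (s : ℝ) :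
    Odd #{i | θ i ≤ s} ↔ s ∈ Set.Ico (θ 0) (θ 1) ∪ Set.Ico (θ 2) (θ 3) := by
  have h01 : θ 0 < θ 1 := hθ (by decide)
  have h12 : θ 1 < θ 2 := hθ (by decide)
  have h23 : θ 2 < θ 3 := hθ (by decide)
  rw [odd_card_filter_le_iff_succ hθ.monotone,
    odd_card_filter_le_iff_three (θ := fun i => θ i.succ) (hθ.comp Fin.strictMono_succ)]
  simp only [Set.mem_union, Set.mem_Ico, Set.mem_Ici, not_and, not_lt, not_or, not_le,
    Fin.succ_zero_eq_one, Fin.succ_one_eq_two, Fin.reduceSucc]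
  grind

section ThresholdGraph

variable {V : Type*} {G : SimpleGraph V}

theorem isKThresholdGraph_one_iff :
    IsKThresholdGraph G 1 ↔ ∃ a : ℝ, ∃ r : V → ℝ, ∀ u v, u ≠ v → (G.Adj u v ↔ a ≤ r u + r v) := by
  constructor
  · rintro ⟨θ, -, r, hr⟩
    exact ⟨θ 0, r, fun u v huv => (hr u v huv).trans (odd_card_filter_le_iff_one θ _)⟩
  · rintro ⟨a, r, hr⟩
    refine ⟨fun _ => a, Subsingleton.strictMono _, r, fun u v huv => ?_⟩
    rw [hr u v huv, odd_card_filter_le_iff_one]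

theorem isKThresholdGraph_two_of_adj_iff {a b : ℝ} (hab : a < b) (r : V → ℝ)
    (hr : ∀ u v, u ≠ v → (G.Adj u v ↔ r u + r v ∈ Set.Ico a b)) : IsKThresholdGraph G 2 := by
  have hθ : StrictMono ![a, b] := Fin.strictMono_iff_lt_succ.2 fun i => by fin_cases i; simpa
  exact ⟨![a, b], hθ, r, fun u v huv => by rw [hr u v huv, odd_card_filter_le_iff_two hθ]; rfl⟩

theorem IsKThresholdGraph.exists_adj_iff_three (h : IsKThresholdGraph G 3) :
    ∃ a b c : ℝ, ∃ r : V → ℝ, ∀ u v, u ≠ v → (G.Adj u v ↔ r u + r v ∈ Set.Ico a b ∪ Set.Ici c) := by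
  obtain ⟨θ, hθ, r, hr⟩ := h
  exact ⟨θ 0, θ 1, θ 2, r, fun u v huv => (hr u v huv).trans (odd_card_filter_le_iff_three hθ _)⟩

theorem isKThresholdGraph_four_of_adj_iff {a b c d : ℝ} (hab : a < b) (hcd : c < d)
    (hsep : b < c ∨ d < a) (r : V → ℝ)
    (hr : ∀ u v, u ≠ v → (G.Adj u v ↔ r u + r v ∈ Set.Ico a b ∪ Set.Ico c d)) :
    IsKThresholdGraph G 4 := by
  wlog hbc : b < c generalizing a b c d
  · exact this hcd hab (by tauto) (by simpa only [Set.union_comm] using hr) (hsep.resolve_left hbc)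
  have hθ : StrictMono ![a, b, c, d] :=
    Fin.strictMono_iff_lt_succ.2 fun i => by fin_cases i <;> simpa
  exact ⟨![a, b, c, d], hθ, r, fun u v huv => by
    rw [hr u v huv, odd_card_filter_le_iff_four hθ]; rfl⟩

theorem IsKThresholdGraph.mono [Finite V] {k m : ℕ} (h : IsKThresholdGraph G k) (hkm : k ≤ m) :
    IsKThresholdGraph G m := by
  induction m, hkm using Nat.le_induction with
  | base => exact h
  | succ m _ ih =>
    obtain ⟨θ, hθ, r, hr⟩ := ih
    obtain ⟨B, hB⟩ : BddAbove (Set.range θ ∪ Set.range fun p : V × V => r p.1 + r p.2) :=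
      ((Set.finite_range _).union (Set.finite_range _)).bddAbove
    have hθB : ∀ i, θ i < B + 1 := fun i => (hB (.inl ⟨i, rfl⟩)).trans_lt (lt_add_one B)
    have hrB : ∀ u v, ¬B + 1 ≤ r u + r v :=
      fun u v => not_le.2 ((hB (.inr ⟨(u, v), rfl⟩)).trans_lt (lt_add_one B))
    refine ⟨Fin.snoc θ (B + 1), fun i j hij => ?_, r, fun u v huv => ?_⟩
    · induction j using Fin.lastCases with
      | last =>
        induction i using Fin.lastCases with
        | last => exact absurd hij (lt_irrefl _)
        | cast i => simpa using hθB i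
      | cast j =>
        induction i using Fin.lastCases with
        | last => exact absurd hij (not_lt.2 (Fin.castSucc_lt_last j).le)
        | cast i => simpa using hθ (Fin.castSucc_lt_castSucc_iff.1 hij)
    · rw [hr u v huv, card_filter, card_filter, Fin.sum_univ_castSucc]
      simp [hrB]

end ThresholdGraph

theorem Function.Periodic.exists_sub_mul_sub_nonneg {w : ℤ → ℝ} {p : ℕ}
    (hw : Function.Periodic w p) (hp : p ≠ 0) :
    ∃ k, 0 ≤ (w (k + 2) - w k) * (w (k + 3) - w (k + 1)) := by
  by_contra! h
  wlog h0 : 0 < w 2 - w 0 generalizing w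
  · have h0' : w 2 - w 0 ≠ 0 := fun h0' => by simpa [h0'] using h 0
    refine this (w := fun k => -w k) (fun k => by simp [hw k]) (fun k => ?_) ?_
    · convert h k using 1
      ring
    · linarith [(not_lt.1 h0).lt_of_ne h0']
  have step (j : ℕ) : 0 < w (2 * j + 2) - w (2 * j) := by
    induction j with
    | zero => simpa using h0
    | succ j ih =>
      have h1 := h (2 * j)
      have h2 := h (2 * j + 1)
      rw [show (2 : ℤ) * j + 1 + 2 = 2 * j + 3 by ring,
        show (2 : ℤ) * j + 1 + 3 = 2 * j + 4 by ring,
        show (2 : ℤ) * j + 1 + 1 = 2 * j + 2 by ring] at h2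
      have := pos_of_mul_neg_right h2 (neg_of_mul_neg_right h1 ih.le).le
      push_cast
      rwa [show (2 : ℤ) * (j + 1) + 2 = 2 * j + 4 by ring,
        show (2 : ℤ) * (j + 1) = 2 * j + 2 by ring]
  have hmono : StrictMono fun j : ℕ => w (2 * j) :=
    strictMono_nat_of_lt_succ fun j => by simpa [mul_add] using step j
  have := hmono (Nat.pos_of_ne_zero hp)
  simp only [Nat.cast_zero, mul_zero] at this
  exact this.ne' (by simpa using hw.nat_mul_eq 2)

theorem Function.Periodic.exists_add_three_mem_Ico {w : ℤ → ℝ} {p : ℕ}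
    (hw : Function.Periodic w p) (hp : p ≠ 0) {a b : ℝ}
    (hedge : ∀ k, w k + w (k + 1) ∈ Set.Ico a b) : ∃ k, w k + w (k + 3) ∈ Set.Ico a b := by
  obtain ⟨k, hk⟩ := hw.exists_sub_mul_sub_nonneg hp
  have h₁ := hedge k
  have h₂ := hedge (k + 2)
  rw [show k + 2 + 1 = k + 3 by ring] at h₂
  simp only [Set.mem_Ico] at h₁ h₂ ⊢
  refine ⟨k, ?_⟩
  rcases mul_nonneg_iff.1 hk with ⟨hx, hy⟩ | ⟨hx, hy⟩ <;> constructor <;> linarith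

section Cycle

open Fin.CommRing

theorem cycleGraph_adj_intCast {n : ℕ} [NeZero n] (hn : 2 ≤ n) (k d : ℤ) :
    (cycleGraph n).Adj (k : Fin n) ((k + d : ℤ) : Fin n) ↔ (n : ℤ) ∣ d - 1 ∨ (n : ℤ) ∣ d + 1 := by
  obtain ⟨m, rfl⟩ := Nat.exists_eq_add_of_le' hn
  have eq_one (x : ℤ) : (x : Fin (m + 2)) = 1 ↔ ((m + 2 : ℕ) : ℤ) ∣ x - 1 := by
    rw [← sub_eq_zero, ← Int.cast_one, ← Int.cast_sub,
      CharP.intCast_eq_zero_iff (Fin (m + 2)) (m + 2)]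
  rw [cycleGraph_adj, ← Int.cast_sub, ← Int.cast_sub, eq_one, eq_one, or_comm,
    show k - (k + d) - 1 = -(d + 1) by ring, dvd_neg, show k + d - k - 1 = d - 1 by ring]

theorem intCast_eq_intCast_add_iff {n : ℕ} [NeZero n] (k d : ℤ) :
    (k : Fin n) = ((k + d : ℤ) : Fin n) ↔ (n : ℤ) ∣ d := by
  rw [eq_comm, ← sub_eq_zero, ← Int.cast_sub, add_sub_cancel_left,
    CharP.intCast_eq_zero_iff (Fin n) n]

theorem cycleGraph_adj_intCast_add_one {n : ℕ} [NeZero n] (hn : 2 ≤ n) (k : ℤ) :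
    (k : Fin n) ≠ ((k + 1 : ℤ) : Fin n) ∧ (cycleGraph n).Adj (k : Fin n) ((k + 1 : ℤ) : Fin n) := by
  rw [Ne, intCast_eq_intCast_add_iff, cycleGraph_adj_intCast hn]
  exact ⟨fun h => by have := Int.le_of_dvd one_pos h; omega, by simp⟩

theorem cycleGraph_not_adj_intCast_add {n : ℕ} [NeZero n] (k d : ℤ) (hd : 2 ≤ d)
    (hdn : d + 2 ≤ n) :
    (k : Fin n) ≠ ((k + d : ℤ) : Fin n) ∧
      ¬(cycleGraph n).Adj (k : Fin n) ((k + d : ℤ) : Fin n) := by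
  have not_dvd (c : ℤ) (hc : 0 < c) (hcn : c < n) : ¬(n : ℤ) ∣ c :=
    fun h => (Int.le_of_dvd hc h).not_gt hcn
  rw [Ne, intCast_eq_intCast_add_iff, cycleGraph_adj_intCast (by omega), not_or]
  exact ⟨not_dvd d (by omega) (by omega), not_dvd _ (by omega) (by omega),
    not_dvd _ (by omega) (by omega)⟩

theorem cycleGraph_adj_iff_of_val_lt {n : ℕ} {u v : Fin n} (h : (u : ℕ) < v) :
    (cycleGraph n).Adj u v ↔ (v : ℕ) = u + 1 ∨ ((u : ℕ) = 0 ∧ (v : ℕ) + 1 = n) := by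
  rw [cycleGraph_adj', Fin.coe_sub_iff_lt.2 h, Fin.coe_sub_iff_le.2 h.le]
  omega

-- `w k` is the rank of the `k`-th vertex of a cycle and `E` the set of sums that make an edge.
def RealizesCycleLocally (E : Set ℝ) (w : ℤ → ℝ) : Prop :=
  ∀ k, w k + w (k + 1) ∈ E ∧ w k + w (k + 2) ∉ E ∧ w k + w (k + 3) ∉ E

theorem realizesCycleLocally_of_adj_iff {n : ℕ} [NeZero n] (hn : 5 ≤ n) {E : Set ℝ}
    {r : Fin n → ℝ} (hr : ∀ u v, u ≠ v → ((cycleGraph n).Adj u v ↔ r u + r v ∈ E)) :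
    RealizesCycleLocally E fun k => r k := by
  have hn' : (5 : ℤ) ≤ n := by exact_mod_cast hn
  intro k
  obtain ⟨hne1, hadj1⟩ := cycleGraph_adj_intCast_add_one (n := n) (by omega) k
  obtain ⟨hne2, hadj2⟩ := cycleGraph_not_adj_intCast_add (n := n) k 2 le_rfl (by omega)
  obtain ⟨hne3, hadj3⟩ := cycleGraph_not_adj_intCast_add (n := n) k 3 (by norm_num) (by omega)
  exact ⟨(hr _ _ hne1).1 hadj1, fun h => hadj2 ((hr _ _ hne2).2 h),
    fun h => hadj3 ((hr _ _ hne3).2 h)⟩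

end Cycle

namespace RealizesCycleLocally

variable {E : Set ℝ} {w : ℤ → ℝ}

theorem comp_add_const (h : RealizesCycleLocally E w) (c : ℤ) :
    RealizesCycleLocally E fun j => w (j + c) := by
  intro k
  simpa only [add_right_comm] using h (k + c)

theorem comp_const_sub (h : RealizesCycleLocally E w) (c : ℤ) :
    RealizesCycleLocally E fun j => w (c - j) := by
  intro k
  refine ⟨?_, ?_, ?_⟩
  · simpa [add_comm, sub_add_eq_sub_sub] using (h (c - k - 1)).1
  · simpa [add_comm, sub_add_eq_sub_sub] using (h (c - k - 2)).2.1
  · simpa [add_comm, sub_add_eq_sub_sub] using (h (c - k - 3)).2.2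

variable {a b c : ℝ}

theorem add_lt_of_le (h : RealizesCycleLocally (Set.Ico a b ∪ Set.Ici c) w) (h43 : w 4 ≤ w 3) :
    w 3 + w 4 < c := by
  by_contra! heavy
  simp only [RealizesCycleLocally, Set.mem_union, Set.mem_Ico, Set.mem_Ici, not_or, not_and,
    not_lt] at h
  obtain ⟨e01, -, n03⟩ := h 0
  obtain ⟨e12, n13, n14⟩ := h 1
  obtain ⟨e23, n24, n25⟩ := h 2
  obtain ⟨-, n35, n36⟩ := h 3
  obtain ⟨e45, -, -⟩ := h 4
  obtain ⟨e56, -, -⟩ := h 5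
  norm_num at e01 n03 e12 n13 n14 e23 n24 n25 n35 n36 e45 e56
  -- The non-edges at distance 2 and 3 from vertex 3 keep the nearby ranks below `c - w 3 ≤ w 4`,
  -- so the nearby edges are light.
  replace e01 := e01.resolve_right (by linarith [n03.2, n13.2])
  replace e12 := e12.resolve_right (by linarith [n13.2, n24.2])
  replace e45 := e45.resolve_right (by linarith [n35.2])
  replace e56 := e56.resolve_right (by linarith [n35.2, n36.2])
  have h14 : b ≤ w 1 + w 4 := n14.1 (by linarith [e01.1, n03.2])
  have h24 : b ≤ w 2 + w 4 := n24.1 (by linarith [e12.1, n13.2])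
  rcases e23 with ⟨-, h23⟩ | h23
  · linarith
  · have h25 : b ≤ w 2 + w 5 := n25.1 (by linarith [e56.1, n36.2])
    linarith [e45.2, e12.2]

theorem add_succ_lt (h : RealizesCycleLocally (Set.Ico a b ∪ Set.Ici c) w) (k : ℤ) :
    w k + w (k + 1) < c := by
  rcases le_total (w (k + 1)) (w k) with hle | hle
  · have := (h.comp_add_const (k - 3)).add_lt_of_le
    simp only [show (3 : ℤ) + (k - 3) = k by ring, show (4 : ℤ) + (k - 3) = k + 1 by ring] at this
    exact this hle
  · have := (h.comp_const_sub (k + 4)).add_lt_of_le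
    simp only [show k + 4 - 3 = k + 1 by ring, show k + 4 - 4 = k by ring] at this
    linarith [this hle]

end RealizesCycleLocally

open Fin.CommRing in
theorem not_isKThresholdGraph_three_cycleGraph {n : ℕ} (hn : 5 ≤ n) :
    ¬IsKThresholdGraph (cycleGraph n) 3 := by
  intro h
  have : NeZero n := ⟨by omega⟩
  obtain ⟨a, b, c, r, hr⟩ := h.exists_adj_iff_three
  have hw := realizesCycleLocally_of_adj_iff hn hr
  have hper : Function.Periodic (fun k : ℤ => r k) n := fun k => by simp
  obtain ⟨k, hk⟩ := hper.exists_add_three_mem_Ico (by omega) fun k =>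
    ((hw k).1.resolve_right (hw.add_succ_lt k).not_ge)
  exact (hw k).2.2 (Or.inl hk)

-- `altRank j = (-1) ^ j * j`, written as a case split that `omega` can use.
def altRank (j : ℕ) : ℤ := if j % 2 = 0 then j else -j

def cycleRank (n : ℕ) (v : Fin n) : ℤ :=
  if (v : ℕ) + 1 = n then 1 - 2 * altRank (n - 2) else 2 * altRank v

theorem isKThresholdGraph_four_cycleGraph {n : ℕ} (hn : 5 ≤ n) :
    IsKThresholdGraph (cycleGraph n) 4 := by
  set X : ℤ := 1 - 2 * altRank (n - 2) with hX
  have hsep : 3 < X ∨ X + 1 < -2 := by simp only [hX, altRank]; split_ifs <;> omega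
  refine isKThresholdGraph_four_of_adj_iff (a := -2) (b := 3) (c := X) (d := X + 1) (by norm_num)
    (by simp) (by exact_mod_cast hsep) (fun v => (cycleRank n v : ℝ)) fun u v huv => ?_
  wlog huv' : (u : ℕ) < v generalizing u v
  · rw [adj_comm, add_comm (cycleRank n u : ℝ)]
    exact this v u huv.symm (lt_of_le_of_ne (not_lt.1 huv') (Fin.val_ne_of_ne huv.symm))
  rw [cycleGraph_adj_iff_of_val_lt huv']
  have hv := v.isLt
  simp only [Set.mem_union, Set.mem_Ico]
  norm_cast
  simp only [cycleRank, altRank, hX]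
  split_ifs <;> omega

theorem isKThresholdGraph_one_cycleGraph_three : IsKThresholdGraph (cycleGraph 3) 1 := by
  refine isKThresholdGraph_one_iff.2 ⟨0, fun _ => 0, fun u v huv => ?_⟩
  simp [cycleGraph_three_eq_top, huv]

theorem isKThresholdGraph_two_cycleGraph_four : IsKThresholdGraph (cycleGraph 4) 2 := by
  refine isKThresholdGraph_two_of_adj_iff (a := 1) (b := 2) one_lt_two ![0, 1, 0, 1]
    fun u v huv => ?_
  fin_cases u <;> fin_cases v <;> simp at huv ⊢ <;> norm_num <;> decide

theorem not_isKThresholdGraph_one_cycleGraph_four : ¬IsKThresholdGraph (cycleGraph 4) 1 := by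
  intro h
  obtain ⟨a, r, hr⟩ := isKThresholdGraph_one_iff.1 h
  have h01 := (hr 0 1 (by decide)).1 (by decide)
  have h23 := (hr 2 3 (by decide)).1 (by decide)
  have h02 := mt (hr 0 2 (by decide)).2 (by decide)
  have h13 := mt (hr 1 3 (by decide)).2 (by decide)
  linarith

/-- The threshold number of Cₙ is 1 if n = 3, 2 if n = 4, and 4 if n ≥ 5. -/
theorem threshold_number_of_cycles (n : ℕ) (hn : 3 ≤ n) :
    IsLeast {k : ℕ | 0 < k ∧ IsKThresholdGraph (SimpleGraph.cycleGraph n) k}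
      (if n = 3 then 1 else if n = 4 then 2 else 4) := by
  obtain rfl | rfl | hn5 : n = 3 ∨ n = 4 ∨ 5 ≤ n := by omega
  · exact ⟨⟨one_pos, isKThresholdGraph_one_cycleGraph_three⟩, fun k hk => hk.1⟩
  · rw [if_neg (by norm_num), if_pos rfl]
    refine ⟨⟨two_pos, isKThresholdGraph_two_cycleGraph_four⟩, ?_⟩
    rintro k ⟨hk0, hk⟩
    by_contra! hk2
    obtain rfl : k = 1 := by omega
    exact not_isKThresholdGraph_one_cycleGraph_four hk
  · rw [if_neg (by omega), if_neg (by omega)]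
    refine ⟨⟨four_pos, isKThresholdGraph_four_cycleGraph hn5⟩, ?_⟩
    rintro k ⟨-, hk⟩
    by_contra! hk4
    exact not_isKThresholdGraph_three_cycleGraph hn5 (hk.mono (by omega))
end

section
/- For every positive integer n, the path P_n on n vertices is a 2-threshold graph; that is, there exist thresholds θ_1 < θ_2 and a rank function r on the vertices of P_n such that two distinct vertices are adjacent if and only if their rank sum lies in [θ_1, θ_2). -/
lemma path_two_threshold_key (a b : ℕ) (h : a ≠ b) :
    ((a + 1 = b ∨ b + 1 = a) ↔
      (-1 ≤ (-1:ℤ)^a * a + (-1)^b * b ∧ (-1:ℤ)^a * a + (-1)^b * b < 2)) := by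
  rcases Nat.even_or_odd a with ⟨k, rfl⟩ | ⟨k, rfl⟩ <;>
    rcases Nat.even_or_odd b with ⟨l, rfl⟩ | ⟨l, rfl⟩
  · rw [Even.neg_one_pow ⟨k, rfl⟩, Even.neg_one_pow ⟨l, rfl⟩]; push_cast; omega
  · rw [Even.neg_one_pow ⟨k, rfl⟩, Odd.neg_one_pow ⟨l, rfl⟩]; push_cast; omega
  · rw [Odd.neg_one_pow ⟨k, rfl⟩, Even.neg_one_pow ⟨l, rfl⟩]; push_cast; omega
  · rw [Odd.neg_one_pow ⟨k, rfl⟩, Odd.neg_one_pow ⟨l, rfl⟩]; push_cast; omega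

/-- For every positive n, the path Pₙ is a 2-threshold graph. -/
theorem path_two_threshold (n : ℕ) (hn : 0 < n) :
    ∃ (θ₁ θ₂ : ℝ), θ₁ < θ₂ ∧ ∃ r : Fin n → ℝ, ∀ u v : Fin n, u ≠ v →
      ((SimpleGraph.pathGraph n).Adj u v ↔ θ₁ ≤ r u + r v ∧ r u + r v < θ₂) := by
  refine ⟨-1, 2, by norm_num, fun i => (-1)^(i:ℕ) * (i:ℕ), fun u v huv => ?_⟩
  have hne : (u:ℕ) ≠ (v:ℕ) := fun h => huv (Fin.ext h)
  rw [SimpleGraph.pathGraph_adj, path_two_threshold_key (u:ℕ) (v:ℕ) hne]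
  have hcast : ((-1:ℝ)^(u:ℕ) * ((u:ℕ):ℝ) + (-1)^(v:ℕ) * ((v:ℕ):ℝ))
      = (((-1:ℤ)^(u:ℕ) * (u:ℕ) + (-1)^(v:ℕ) * (v:ℕ) : ℤ) : ℝ) := by
    push_cast; ring
  rw [hcast]
  constructor
  · rintro ⟨h1, h2⟩; exact ⟨by exact_mod_cast h1, by exact_mod_cast h2⟩
  · rintro ⟨h1, h2⟩; exact ⟨by exact_mod_cast h1, by exact_mod_cast h2⟩
end
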